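/- arXiv:2010.12172 — 13 statements merged into one kernel-verified Lean document; each statement's English description precedes it below -/
import Mathlib

section
/- Let α be a type and let u : ℤ → α be a two-sided sequence whose least positive period is p (i.e., u(i + p) = u(i) for all i ∈ ℤ, and no smaller positive integer has this property). Suppose i < j are integers and r ≥ p is an integer such that u(i + t) = u(j + t) for all integers t with 1 ≤ t ≤ r. Then p divides j − i. -/
/-!
Reducing modulo `p`, every position is congruent to one inside the first window, so the
agreement of the two windows makes `j - i` a period of `u`. Periods form a group, hence
`(j - i) % p` is a period too; it lies in `[0, p)`, so by minimality of `p` it must vanish.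
-/

open Function

namespace Function.Periodic

variable {α : Type*} {u : ℤ → α}

theorem int_emod {c d : ℤ} (hc : Periodic u c) (hd : Periodic u d) : Periodic u (d % c) := by
  rw [Int.emod_def, mul_comm]
  exact hd.sub_period (hc.int_mul (d / c))

theorem sub_of_eq_on_window {c i j : ℤ} (hc : Periodic u c) (hc0 : 0 < c)
    (hwin : ∀ t : ℤ, 1 ≤ t → t ≤ c → u (i + t) = u (j + t)) : Periodic u (j - i) := by
  intro x
  set t := (x - i - 1) % c + 1
  have ht₁ : 1 ≤ t := by have := Int.emod_nonneg (x - i - 1) hc0.ne'; omega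
  have htc : t ≤ c := by have := Int.emod_lt_of_pos (x - i - 1) hc0; omega
  have hx : x = i + t + (x - i - 1) / c * c := by
    simp only [t, Int.emod_def]
    ring
  have hmul : Periodic u ((x - i - 1) / c * c) := by simpa using hc.int_mul ((x - i - 1) / c)
  calc u (x + (j - i)) = u (j + t + (x - i - 1) / c * c) := by congr 1; omega
    _ = u (i + t) := by rw [hmul, hwin t ht₁ htc]
    _ = u x := by rw [← hmul (i + t), ← hx]

theorem natCast_dvd_of_minimal {p : ℕ} {d : ℤ} (hp : 0 < p) (hper : Periodic u p)
    (hmin : ∀ q : ℕ, 0 < q → Periodic u q → p ≤ q) (hd : Periodic u d) : (p : ℤ) ∣ d := by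
  have hp' : (0 : ℤ) < p := by exact_mod_cast hp
  have hrem_nonneg := Int.emod_nonneg d hp'.ne'
  have hrem_lt := Int.emod_lt_of_pos d hp'
  by_contra hnd
  have hrem_pos : 0 < d % p :=
    lt_of_le_of_ne hrem_nonneg fun h ↦ hnd (Int.dvd_of_emod_eq_zero h.symm)
  have hrem : Periodic u (d % p).toNat := by
    rw [Int.toNat_of_nonneg hrem_nonneg]
    exact hper.int_emod hd
  have := hmin _ (by omega) hrem
  omega

end Function.Periodic

theorem stmt1_general {α : Type*} (u : ℤ → α) (p : ℕ) (hp : 0 < p)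
    (hper : ∀ i : ℤ, u (i + p) = u i)
    (hmin : ∀ q : ℕ, 0 < q → (∀ i : ℤ, u (i + q) = u i) → p ≤ q)
    (i j : ℤ) (r : ℕ) (hr : p ≤ r)
    (hwin : ∀ t : ℤ, 1 ≤ t → t ≤ r → u (i + t) = u (j + t)) :
    (p : ℤ) ∣ j - i := by
  have hr' : (p : ℤ) ≤ r := by exact_mod_cast hr
  have hdiff : Periodic u (j - i) :=
    Periodic.sub_of_eq_on_window hper (by exact_mod_cast hp)
      fun t ht₁ htp ↦ hwin t ht₁ (htp.trans hr')
  exact Periodic.natCast_dvd_of_minimal hp hper hmin hdiff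

/-- If `p` is the least positive period of a two-sided sequence `u : ℤ → α`, and two
windows of length `r ≥ p` starting after positions `i < j` agree, then `p ∣ j - i`. -/
theorem stmt1 {α : Type*} (u : ℤ → α) (p : ℕ) (hp : 0 < p)
    (hper : ∀ i : ℤ, u (i + p) = u i)
    (hmin : ∀ q : ℕ, 0 < q → (∀ i : ℤ, u (i + q) = u i) → p ≤ q)
    (i j : ℤ) (hij : i < j) (r : ℕ) (hr : p ≤ r)
    (hwin : ∀ t : ℤ, 1 ≤ t → t ≤ r → u (i + t) = u (j + t)) :
    (p : ℤ) ∣ j - i :=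
  stmt1_general u p hp hper hmin i j r hr hwin
end

section
/- Let α be a finite alphabet and let W be a set of words (finite lists) over α that is factor-closed. Suppose that for some integer d ≥ 3, the number of words in W of length d is at most d − 1. Then for every integer h ≥ d, the number of words in W of length h is at most (d − 1)³. -/
/-!
Write `W_n` for the words of `W` of length `n` and assume `|W_d| ≤ d`. Fix `w ∈ W_h` and count
its factors of length `n` that start at positions `≤ h - d`. This count is nondecreasing in `n`,
equals `1` for `n = 0` and is at most `|W_d| ≤ d` for `n = d`, so it stops growing at some
`n < d`. Then each of these length-`n` factors has a unique one-letter extension, so the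
length-`n` factors at consecutive positions form an orbit of a map on a set of at most `|W_d|`
elements, and `w` is periodic with a period `p ≤ |W_d|` outside its first and last `d` letters.
Hence a word of `W_h` is determined by its prefix and suffix of length `d` together with `p`,
which leaves at most `|W_d|³` possibilities.
-/

open Set

namespace List

variable {α : Type*}

def IsFactorClosed (W : Set (List α)) : Prop :=
  ∀ w ∈ W, ∀ u : List α, u <:+: w → u ∈ W

section windows

variable [DecidableEq α] (w : List α) (N : ℕ)

/-- Factors starting within `n` of the end of `w` are shorter than `n`. -/
def windowsUpTo (n : ℕ) : Finset (List α) :=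
  (Finset.range (N + 1)).image fun x => (w.drop x).take n

theorem windowsUpTo_zero : windowsUpTo w N 0 = {[]} := by
  simp only [windowsUpTo, take_zero]
  exact Finset.image_const ⟨0, by simp⟩ _

theorem image_take_windowsUpTo_succ (n : ℕ) :
    (windowsUpTo w N (n + 1)).image (take n) = windowsUpTo w N n := by
  simp [windowsUpTo, Finset.image_image, Function.comp_def, take_take]

theorem card_windowsUpTo_mono : Monotone fun n => (windowsUpTo w N n).card :=
  monotone_nat_of_le_succ fun n => by
    rw [← image_take_windowsUpTo_succ]
    exact Finset.card_image_le

variable {w N}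

theorem take_drop_mem_windowsUpTo {x : ℕ} (hx : x ≤ N) (n : ℕ) :
    (w.drop x).take n ∈ windowsUpTo w N n :=
  Finset.mem_image_of_mem _ (Finset.mem_range_succ_iff.mpr hx)

theorem exists_card_windowsUpTo_succ_le {d : ℕ} (hd : (windowsUpTo w N d).card ≤ d) :
    ∃ n < d, (windowsUpTo w N (n + 1)).card ≤ (windowsUpTo w N n).card := by
  by_contra! hgrow
  have hlower : ∀ n ≤ d, n + 1 ≤ (windowsUpTo w N n).card := by
    intro n hn
    induction n with
    | zero => simp [windowsUpTo_zero]
    | succ n ih => exact (ih (by omega)).trans_lt (hgrow n (by omega))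
  have := hlower d le_rfl
  omega

theorem take_succ_eq_of_take_eq {n : ℕ}
    (hn : (windowsUpTo w N (n + 1)).card ≤ (windowsUpTo w N n).card)
    {x y : ℕ} (hx : x ≤ N) (hy : y ≤ N) (hxy : (w.drop x).take n = (w.drop y).take n) :
    (w.drop x).take (n + 1) = (w.drop y).take (n + 1) := by
  have hinj : InjOn (take n) (windowsUpTo w N (n + 1) : Set (List α)) := by
    rw [← Finset.card_image_iff]
    refine le_antisymm Finset.card_image_le ?_
    rwa [image_take_windowsUpTo_succ]
  exact hinj (take_drop_mem_windowsUpTo hx _) (take_drop_mem_windowsUpTo hy _)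
    (by simpa [take_take] using hxy)

theorem getElem?_add_eq_of_take_eq {n : ℕ}
    (hn : (windowsUpTo w N (n + 1)).card ≤ (windowsUpTo w N n).card)
    {i j : ℕ} (hij : i ≤ j) (hwin : (w.drop i).take n = (w.drop j).take n)
    {k : ℕ} (hk : j + k ≤ N) : w[i + k]? = w[j + k]? := by
  suffices (w.drop (i + k)).take (n + 1) = (w.drop (j + k)).take (n + 1) by
    simpa [head?_take] using congrArg head? this
  induction k with
  | zero => exact take_succ_eq_of_take_eq hn (by omega) (by omega) hwin
  | succ k ih =>
    have htail : (w.drop (i + k + 1)).take n = (w.drop (j + k + 1)).take n := by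
      simpa [drop_take, drop_drop, Nat.add_comm] using congrArg (drop 1) (ih (by omega))
    exact take_succ_eq_of_take_eq hn (by omega) (by omega) htail

theorem exists_take_eq_of_card_windowsUpTo_le {n : ℕ} (hN : (windowsUpTo w N n).card ≤ N) :
    ∃ i j, i < j ∧ j ≤ (windowsUpTo w N n).card ∧
      (w.drop i).take n = (w.drop j).take n := by
  obtain ⟨x, hx, y, hy, hne, heq⟩ := Finset.exists_ne_map_eq_of_card_lt_of_maps_to
    (s := Finset.range ((windowsUpTo w N n).card + 1)) (t := windowsUpTo w N n)
    (f := fun x => (w.drop x).take n) (by simp)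
    fun x hx => take_drop_mem_windowsUpTo (by simp only [Finset.coe_range, mem_Iio] at hx; omega) n
  rw [Finset.mem_range] at hx hy
  rcases hne.lt_or_gt with hxy | hyx
  · exact ⟨x, y, hxy, by omega, heq⟩
  · exact ⟨y, x, hyx, by omega, heq.symm⟩

theorem exists_period_of_card_windowsUpTo_le {d : ℕ} (hd : (windowsUpTo w N d).card ≤ d) :
    ∃ p, 0 < p ∧ p ≤ (windowsUpTo w N d).card ∧
      ∀ y ∈ Icc (windowsUpTo w N d).card N, w[y - p]? = w[y]? := by
  obtain ⟨n, hnd, hn⟩ := exists_card_windowsUpTo_succ_le hd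
  have hcard : (windowsUpTo w N n).card ≤ (windowsUpTo w N d).card :=
    card_windowsUpTo_mono w N hnd.le
  rcases le_or_gt (windowsUpTo w N n).card N with hN | hN
  · obtain ⟨i, j, hij, hj, hwin⟩ := exists_take_eq_of_card_windowsUpTo_le hN
    refine ⟨j - i, by omega, by omega, fun y ⟨hcy, hyN⟩ => ?_⟩
    convert getElem?_add_eq_of_take_eq hn hij.le hwin (k := y - j) (by omega) using 2 <;> omega
  · have hpos : 1 ≤ (windowsUpTo w N d).card :=
      (card_windowsUpTo_mono w N (Nat.zero_le d)).trans' (by simp [windowsUpTo_zero])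
    exact ⟨1, one_pos, hpos, fun y hy => absurd (hy.1.trans hy.2) (by omega)⟩

end windows

theorem eq_of_take_eq_of_drop_eq {w₁ w₂ : List α} {L d p : ℕ} (hp : 0 < p) (hpd : p ≤ d)
    (htake : w₁.take d = w₂.take d) (hdrop : w₁.drop (L - d) = w₂.drop (L - d))
    (hper₁ : ∀ y ∈ Icc d (L - d), w₁[y - p]? = w₁[y]?)
    (hper₂ : ∀ y ∈ Icc d (L - d), w₂[y - p]? = w₂[y]?) : w₁ = w₂ := by
  refine ext_getElem? fun y => ?_
  induction y using Nat.strong_induction_on with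
  | _ y ih =>
    rcases lt_or_ge y d with hy | hy
    · simpa [getElem?_take, hy] using congrArg (·[y]?) htake
    rcases le_or_gt (L - d) y with hy' | hy'
    · simpa [getElem?_drop, Nat.add_sub_cancel' hy'] using congrArg (·[y - (L - d)]?) hdrop
    rw [← hper₁ y ⟨hy, hy'.le⟩, ← hper₂ y ⟨hy, hy'.le⟩, ih (y - p) (by omega)]

theorem ncard_length_eq_le_pow_three [Finite α] {W : Set (List α)} (hW : IsFactorClosed W)
    {d h : ℕ} (hdh : d ≤ h) (hd : {w ∈ W | w.length = d}.ncard ≤ d) :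
    {w ∈ W | w.length = h}.ncard ≤ {w ∈ W | w.length = d}.ncard ^ 3 := by
  classical
  set B := {w ∈ W | w.length = d}
  have hB : B.Finite := (finite_length_eq α d).subset fun w hw => hw.2
  have hperiod : ∀ w ∈ {w ∈ W | w.length = h}, ∃ p, 0 < p ∧ p ≤ B.ncard ∧
      ∀ y ∈ Icc d (h - d), w[y - p]? = w[y]? := by
    rintro w ⟨hw, rfl⟩
    have hc : (windowsUpTo w (w.length - d) d).card ≤ B.ncard := by
      rw [← ncard_coe_finset]
      refine ncard_le_ncard (fun u hu => ?_) hB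
      obtain ⟨x, hx, rfl⟩ := Finset.mem_image.mp hu
      rw [Finset.mem_range] at hx
      exact ⟨hW w hw _ ((take_prefix _ _).isInfix.trans (drop_suffix _ _).isInfix),
        by simp; omega⟩
    obtain ⟨p, hp, hpc, hper⟩ := exists_period_of_card_windowsUpTo_le (hc.trans hd)
    exact ⟨p, hp, hpc.trans hc, fun y hy => hper y ⟨hc.trans (hd.trans hy.1), hy.2⟩⟩
  choose! p hp using hperiod
  calc {w ∈ W | w.length = h}.ncard
      ≤ (B ×ˢ B ×ˢ Icc 1 B.ncard).ncard := by
        refine ncard_le_ncard_of_injOn (fun w => (w.take d, w.drop (h - d), p w)) ?_ ?_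
          (hB.prod (hB.prod (finite_Icc _ _)))
        · rintro w ⟨hw, rfl⟩
          exact ⟨⟨hW w hw _ (take_prefix _ _).isInfix, by simpa using hdh⟩,
            ⟨hW w hw _ (drop_suffix _ _).isInfix, by simp; omega⟩,
            (hp w ⟨hw, rfl⟩).1, (hp w ⟨hw, rfl⟩).2.1⟩
        · rintro w₁ hw₁ w₂ hw₂ heq
          simp only [Prod.mk.injEq] at heq
          obtain ⟨htake, hdrop, hpeq⟩ := heq
          obtain ⟨hp₁, hpB, hper₁⟩ := hp w₁ hw₁
          exact eq_of_take_eq_of_drop_eq hp₁ (hpB.trans hd) htake hdrop hper₁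
            (hpeq ▸ (hp w₂ hw₂).2.2)
    _ = B.ncard ^ 3 := by
        rw [ncard_prod, ncard_prod, ncard_Icc_nat, Nat.add_sub_cancel, pow_three]

end List

theorem stmt2_general {α : Type*} [Fintype α] (W : Set (List α))
    (hW : ∀ w ∈ W, ∀ u : List α, u <:+: w → u ∈ W)
    (d : ℕ)
    (hcount : {w ∈ W | w.length = d}.ncard ≤ d - 1) :
    ∀ h : ℕ, d ≤ h → {w ∈ W | w.length = h}.ncard ≤ (d - 1) ^ 3 := fun _ hdh =>
  (List.ncard_length_eq_le_pow_three hW hdh (hcount.trans (Nat.sub_le d 1))).trans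
    (Nat.pow_le_pow_left hcount 3)

/-- If `W` is a factor-closed set of words over a finite alphabet which contains at most
`d - 1` words of length `d` (for some `d ≥ 3`), then for every `h ≥ d` the set `W`
contains at most `(d - 1)³` words of length `h`. -/
theorem stmt2 {α : Type*} [Fintype α] (W : Set (List α))
    (hW : ∀ w ∈ W, ∀ u : List α, u <:+: w → u ∈ W)
    (d : ℕ) (hd : 3 ≤ d)
    (hcount : {w ∈ W | w.length = d}.ncard ≤ d - 1) :
    ∀ h : ℕ, d ≤ h → {w ∈ W | w.length = h}.ncard ≤ (d - 1) ^ 3 :=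
  stmt2_general W hW d hcount
end

section
/- Let α be a finite alphabet and let W be a factor-closed set of words over α such that, for some integer d ≥ 3, the number of words in W of length d is at most d − 1. Then every word w ∈ W with length |w| ≥ 2d − 1 can be written as a concatenation w = w₁ ++ w₂ ++ w₃, where: w₂ is periodic with minimal period p for some positive integer p ≤ d − 1 (i.e., p is the least positive integer such that w₂(k) = w₂(k + p) whenever both positions are defined, and p < |w₂|), the length of w₂ is at least p + d, and the lengths of w₁ and w₃ are both at most d − p. -/
/-- A word `v` has period `p` if `v (k) = v (k + p)` whenever both positions are defined. -/
def ListHasPeriod {α : Type*} (v : List α) (p : ℕ) : Prop :=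
  ∀ (k : ℕ) (h : k + p < v.length), v[k]'(by omega) = v[k + p]'h

/-!
Let `P j` be the number of factors of length `j` of `w`. Since `P 1 ≥ 1` and `P d < d`, there is
`m < d` with `P m ≥ m` and `P (m + 1) ≤ m`. The windows of length `m` of `w` form a walk whose
distinct edges are at most the factors of length `m + 1`; a walk with no more edges than
vertices is a prefix leading into a cycle of length `l`, wound around repeatedly, followed by a
tail, and prefix, cycle and tail have pairwise distinct vertices, so together they have length
at most `m`. The letters read along the cycle form an `l`-periodic factor `w₂`, and its minimal
period `p ≤ l` gives the decomposition.
-/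

open Finset

namespace Walk

variable {β : Type*} [DecidableEq β] (v : ℕ → β)

def vertexSet (N : ℕ) : Finset β := (range (N + 1)).image v

def edgeSet (N : ℕ) : Finset (β × β) := (range N).image fun t => (v t, v (t + 1))

def freshBackSteps (N : ℕ) : Finset ℕ :=
  (range N).filter fun t => v (t + 1) ∈ vertexSet v t ∧ (v t, v (t + 1)) ∉ edgeSet v t

variable {v}

lemma vertexSet_succ (N : ℕ) : vertexSet v (N + 1) = insert (v (N + 1)) (vertexSet v N) := by
  rw [vertexSet, range_add_one, image_insert, vertexSet]

lemma edgeSet_succ (N : ℕ) : edgeSet v (N + 1) = insert (v N, v (N + 1)) (edgeSet v N) := by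
  rw [edgeSet, range_add_one, image_insert, edgeSet]

lemma mem_vertexSet {N : ℕ} {x : β} : x ∈ vertexSet v N ↔ ∃ t ≤ N, v t = x := by
  simp [vertexSet]

lemma mem_edgeSet {N : ℕ} {e : β × β} : e ∈ edgeSet v N ↔ ∃ t < N, (v t, v (t + 1)) = e := by
  simp [edgeSet]

/-- A step to a new vertex always uses a new edge, so the excess of edges over vertices grows
exactly at the fresh back steps. -/
theorem card_edgeSet_add_one (N : ℕ) :
    #(edgeSet v N) + 1 = #(vertexSet v N) + #(freshBackSteps v N) := by
  induction N with
  | zero => simp [edgeSet, vertexSet, freshBackSteps]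
  | succ N ih =>
    have hfresh : freshBackSteps v (N + 1) = if v (N + 1) ∈ vertexSet v N ∧
        (v N, v (N + 1)) ∉ edgeSet v N then insert N (freshBackSteps v N)
        else freshBackSteps v N := by
      rw [freshBackSteps, range_add_one, filter_insert, freshBackSteps]
    rw [vertexSet_succ, edgeSet_succ, hfresh]
    by_cases hV : v (N + 1) ∈ vertexSet v N
    · by_cases hE : (v N, v (N + 1)) ∈ edgeSet v N
      · simp [hV, hE, ih]
      · have hN : N ∉ freshBackSteps v N := by simp [freshBackSteps]
        simp only [hV, hE, not_false_eq_true, and_self, if_true, insert_eq_of_mem,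
          card_insert_of_notMem, card_insert_of_notMem hN]
        omega
    · have hE : (v N, v (N + 1)) ∉ edgeSet v N := fun h => hV <| by
        obtain ⟨t, ht, he⟩ := mem_edgeSet.mp h
        exact mem_vertexSet.mpr ⟨t + 1, ht, (Prod.mk.inj he).2⟩
      simp only [hV, hE, false_and, if_false, card_insert_of_notMem, not_false_eq_true]
      omega

lemma eq_of_forall_lt_notMem_vertexSet {T : ℕ} (h : ∀ t < T, v (t + 1) ∉ vertexSet v t)
    {x y : ℕ} (hx : x ≤ T) (hy : y ≤ T) (hxy : v x = v y) : x = y := by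
  wlog hlt : x < y generalizing x y
  · rcases (not_lt.mp hlt).lt_or_eq with h' | h'
    · exact (this hy hx hxy.symm h').symm
    · exact h'.symm
  have hback := h (y - 1) (by omega)
  rw [Nat.sub_add_cancel (by omega)] at hback
  exact absurd (mem_vertexSet.mpr ⟨x, by omega, hxy⟩) hback

lemma exists_succ_mem_vertexSet_of_card_edgeSet_lt {N : ℕ} (hEN : #(edgeSet v N) < N) :
    ∃ t, t < N ∧ v (t + 1) ∈ vertexSet v t := by
  by_contra! h
  have hinj : Set.InjOn v (range (N + 1)) := fun x hx y hy hxy =>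
    eq_of_forall_lt_notMem_vertexSet h (Nat.lt_succ_iff.mp (mem_range.mp hx))
      (Nat.lt_succ_iff.mp (mem_range.mp hy)) hxy
  have hV : #(vertexSet v N) = N + 1 := by rw [vertexSet, card_image_of_injOn hinj, card_range]
  have := card_edgeSet_add_one (v := v) N
  omega

lemma add_le_card_vertexSet {s l b N : ℕ} (hsb : s + l ≤ b) (hbN : b ≤ N)
    (hpre : ∀ x < s + l, ∀ y < s + l, v x = v y → x = y)
    (htail : ∀ x y, x < y → b < y → y ≤ N → v x ≠ v y) :
    s + l + (N - b) ≤ #(vertexSet v N) := by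
  set A := range (s + l) ∪ Ioc b N
  have hAcard : #A = s + l + (N - b) := by
    rw [card_union_of_disjoint (disjoint_left.mpr fun x hx hx' => by
      simp only [mem_range, mem_Ioc] at hx hx'; omega), card_range, Nat.card_Ioc]
  have hAne : ∀ x ∈ A, ∀ y ∈ A, x < y → v x ≠ v y := by
    intro x hx y hy hxy heq
    simp only [A, mem_union, mem_range, mem_Ioc] at hx hy
    rcases hy with hy | hy
    · exact hxy.ne (hpre x (by omega) y hy heq)
    · exact htail x y hxy hy.1 hy.2 heq
  have hAinj : Set.InjOn v A := fun x hx y hy heq => by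
    rcases lt_trichotomy x y with h | h | h
    · exact absurd heq (hAne x hx y hy h)
    · exact h
    · exact absurd heq.symm (hAne y hy x hx h)
  have hAV : A.image v ⊆ vertexSet v N := fun x hx => by
    obtain ⟨t, ht, rfl⟩ := mem_image.mp hx
    simp only [A, mem_union, mem_range, mem_Ioc] at ht
    exact mem_vertexSet.mpr ⟨t, by omega, rfl⟩
  rw [← hAcard, ← card_image_of_injOn hAinj]
  exact card_le_card hAV

omit [DecidableEq β] in
/-- Reduce the larger index by `l` until both lie in the injective prefix. -/
lemma succ_eq_of_injOn_of_periodic {s l b : ℕ} (hl : 0 < l)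
    (hinj : ∀ x < s + l, ∀ y < s + l, v x = v y → x = y)
    (hper : ∀ t, s ≤ t → t + l ≤ b → v t = v (t + l)) {x y : ℕ} (hx : x < b) (hy : y < b)
    (hxy : v x = v y) : v (x + 1) = v (y + 1) := by
  induction h : x + y using Nat.strong_induction_on generalizing x y with
  | _ n ih =>
  wlog hle : x ≤ y generalizing x y
  · exact (this hy hx hxy.symm (by omega) (by omega)).symm
  by_cases hys : y < s + l
  · rw [hinj x (by omega) y hys hxy]
  have hred : v y = v (y - l) := by
    rw [hper (y - l) (by omega) (by omega), Nat.sub_add_cancel (by omega)]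
  have hred' : v (y + 1) = v (y - l + 1) := by
    rw [hper (y - l + 1) (by omega) (by omega)]
    congr 1
    omega
  rw [hred', ih (x + (y - l)) (by omega) hx (by omega) (hxy.trans hred) rfl]

/-- Once every back step reuses an old edge, the first step out of the deterministic part
`[0, b]` goes to a new vertex, and from a new vertex there is no old edge to reuse. -/
lemma succ_notMem_vertexSet_of_le {s l b N : ℕ} (hl : 0 < l)
    (hinj : ∀ x < s + l, ∀ y < s + l, v x = v y → x = y)
    (hper : ∀ t, s ≤ t → t + l ≤ b → v t = v (t + l)) (hsb : s + l ≤ b)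
    (hexit : b < N → v (b - l + 1) ≠ v (b + 1))
    (hstale : ∀ t, b ≤ t → t < N → v (t + 1) ∈ vertexSet v t → (v t, v (t + 1)) ∈ edgeSet v t)
    {t : ℕ} (hbt : b ≤ t) (htN : t < N) : v (t + 1) ∉ vertexSet v t := by
  induction t, hbt using Nat.le_induction with
  | base =>
    intro hmem
    obtain ⟨u, hu, he⟩ := mem_edgeSet.mp (hstale b le_rfl htN hmem)
    obtain ⟨hu₁, hu₂⟩ := Prod.mk.inj he
    refine hexit htN ?_
    rw [← hu₂]
    refine succ_eq_of_injOn_of_periodic hl hinj hper (by omega) hu ?_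
    rw [hu₁, hper (b - l) (by omega) (by omega), Nat.sub_add_cancel (by omega)]
  | succ t hbt ih =>
    intro hmem
    obtain ⟨u, hu, he⟩ := mem_edgeSet.mp (hstale (t + 1) (by omega) htN hmem)
    exact ih (by omega) (mem_vertexSet.mpr ⟨u, by omega, (Prod.mk.inj he).1⟩)

/-- The first return to a visited vertex closes a cycle along a back step to a new edge; the edge
count allows no other such step, so afterwards the walk follows old edges, which keep it on the
cycle, until it leaves along a tail of new vertices. Prefix, one turn of the cycle and tail have
pairwise distinct vertices. -/
theorem exists_periodic_of_card_edgeSet_le {N : ℕ} (hVE : #(edgeSet v N) ≤ #(vertexSet v N))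
    (hEN : #(edgeSet v N) < N) :
    ∃ s l b, 0 < l ∧ s + l ≤ b ∧ b ≤ N ∧ (∀ t, s ≤ t → t + l ≤ b → v t = v (t + l)) ∧
      s + l + (N - b) ≤ #(edgeSet v N) := by
  classical
  have hcard := card_edgeSet_add_one (v := v) N
  have hback := exists_succ_mem_vertexSet_of_card_edgeSet_lt hEN
  set t₀ := Nat.find hback
  have ht₀ : t₀ < N ∧ v (t₀ + 1) ∈ vertexSet v t₀ := Nat.find_spec hback
  have hpre : ∀ x ≤ t₀, ∀ y ≤ t₀, v x = v y → x = y := fun x hx y hy =>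
    eq_of_forall_lt_notMem_vertexSet (fun t ht hmem => Nat.find_min hback ht ⟨by omega, hmem⟩)
      hx hy
  obtain ⟨s, hs, hvs⟩ := mem_vertexSet.mp ht₀.2
  set l := t₀ + 1 - s
  have hfresh : t₀ ∈ freshBackSteps v N := by
    refine mem_filter.mpr ⟨mem_range.mpr ht₀.1, ht₀.2, fun h => ?_⟩
    obtain ⟨u, hu, he⟩ := mem_edgeSet.mp h
    exact absurd (hpre u hu.le t₀ le_rfl (Prod.mk.inj he).1) hu.ne
  have hstale : ∀ t, t₀ < t → t < N → v (t + 1) ∈ vertexSet v t →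
      (v t, v (t + 1)) ∈ edgeSet v t := fun t ht htN hmem => by
    by_contra h
    have hone : #(freshBackSteps v N) ≤ 1 := by omega
    exact ht.ne (card_le_one.mp hone _ hfresh t (mem_filter.mpr ⟨mem_range.mpr htN, hmem, h⟩))
  let Q b := ∀ t, s ≤ t → t + l ≤ b → v t = v (t + l)
  have hQ₀ : Q (s + l) := fun t ht htl => by
    rw [show t = s by omega, show s + l = t₀ + 1 by omega, hvs]
  set b := Nat.findGreatest Q N
  have hb : s + l ≤ b := Nat.le_findGreatest (by omega) hQ₀
  have hbN : b ≤ N := Nat.findGreatest_le N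
  have hQb : Q b := Nat.findGreatest_spec (by omega) hQ₀
  have hexit : b < N → v (b - l + 1) ≠ v (b + 1) := fun hbN heq =>
    Nat.findGreatest_is_greatest (Nat.lt_succ_self b) hbN fun t ht htl => by
      rcases Nat.lt_or_ge (t + l) (b + 1) with h | h
      · exact hQb t ht (by omega)
      · rw [show t = b - l + 1 by omega, heq, show b - l + 1 + l = b + 1 by omega]
  have htail : ∀ x y, x < y → b < y → y ≤ N → v x ≠ v y := fun x y hxy hby hyN heq => by
    refine succ_notMem_vertexSet_of_le (by omega) (fun x hx y hy => hpre x (by omega) y (by omega))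
      hQb hb hexit (fun t ht => hstale t (by omega)) (t := y - 1) (by omega) (by omega) ?_
    rw [Nat.sub_add_cancel (by omega)]
    exact mem_vertexSet.mpr ⟨x, by omega, heq⟩
  have hF : 0 < #(freshBackSteps v N) := card_pos.mpr ⟨t₀, hfresh⟩
  have := add_le_card_vertexSet hb hbN (fun x hx y hy => hpre x (by omega) y (by omega)) htail
  exact ⟨s, l, b, by omega, hb, hbN, hQb, by omega⟩

end Walk

lemma exists_le_apply_and_apply_succ_le (g : ℕ → ℕ) {d : ℕ} (h₁ : 1 ≤ g 1) (hd : g d < d) :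
    ∃ m, 0 < m ∧ m < d ∧ m ≤ g m ∧ g (m + 1) ≤ m := by
  classical
  have hex : ∃ k, g k < k := ⟨d, hd⟩
  have hk := Nat.find_spec hex
  have hkd : Nat.find hex ≤ d := Nat.find_min' hex hd
  have hk₂ : 2 ≤ Nat.find hex := by
    by_contra h
    interval_cases h : Nat.find hex <;> omega
  refine ⟨Nat.find hex - 1, by omega, by omega, ?_, ?_⟩
  · exact not_lt.mp (Nat.find_min hex (by omega))
  · rw [Nat.sub_add_cancel (by omega)]
    omega

lemma exists_minimal_period {α : Type*} {v : List α} {l : ℕ} (hl : 0 < l)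
    (h : ListHasPeriod v l) :
    ∃ p, 0 < p ∧ p ≤ l ∧ ListHasPeriod v p ∧ ∀ p', 0 < p' → ListHasPeriod v p' → p ≤ p' := by
  classical
  have hex : ∃ p, 0 < p ∧ ListHasPeriod v p := ⟨l, hl, h⟩
  obtain ⟨hp, hper⟩ := Nat.find_spec hex
  exact ⟨Nat.find hex, hp, Nat.find_min' hex ⟨hl, h⟩, hper,
    fun p' hp' hper' => Nat.find_min' hex ⟨hp', hper'⟩⟩

section Factors

variable {α : Type*} [DecidableEq α]

/-- For `j > w.length` this is the junk value `{w}`. -/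
def factorsOfLength (w : List α) (j : ℕ) : Finset (List α) :=
  (range (w.length - j + 1)).image fun t => (w.drop t).take j

lemma card_factorsOfLength_pos (w : List α) (j : ℕ) : 0 < #(factorsOfLength w j) :=
  card_pos.mpr ⟨_, mem_image_of_mem _ (mem_range.mpr (Nat.succ_pos _))⟩

lemma isInfix_of_mem_factorsOfLength {w u : List α} {j : ℕ} (hj : j ≤ w.length)
    (hu : u ∈ factorsOfLength w j) : u <:+: w ∧ u.length = j := by
  obtain ⟨t, ht, rfl⟩ := mem_image.mp hu
  refine ⟨(List.take_prefix _ _).isInfix.trans (List.drop_suffix _ _).isInfix, ?_⟩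
  simp only [List.length_take, List.length_drop]
  have := mem_range.mp ht
  omega

omit [DecidableEq α] in
lemma listHasPeriod_take_drop {w : List α} {m s l b : ℕ} (hm : 0 < m) (hsb : s + l ≤ b)
    (hper : ∀ t, s ≤ t → t + l ≤ b → (w.drop t).take m = (w.drop (t + l)).take m) :
    ListHasPeriod ((w.drop s).take (b + m - s)) l := by
  intro k hk
  have hk' : k + l < b + m - s := lt_of_lt_of_le hk (by simp)
  set t := min (s + k) (b - l)
  have hwin := congrArg (·[s + k - t]?) (hper t (by omega) (by omega))
  simp only [List.getElem?_take, List.getElem?_drop, if_pos (show s + k - t < m by omega)] at hwin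
  have key : ((w.drop s).take (b + m - s))[k]? = ((w.drop s).take (b + m - s))[k + l]? := by
    simp only [List.getElem?_take, List.getElem?_drop, if_pos hk',
      if_pos (show k < b + m - s by omega)]
    convert hwin using 2 <;> omega
  rw [List.getElem?_eq_getElem (by omega), List.getElem?_eq_getElem hk] at key
  exact Option.some.inj key

/-- The length-`m` windows of `w` form a walk, each of whose edges is read off a factor of
length `m + 1`. -/
theorem exists_append_periodic_of_card_factorsOfLength (w : List α) {m : ℕ} (hm : 0 < m)
    (hmn : 2 * m < w.length) (hV : m ≤ #(factorsOfLength w m))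
    (hE : #(factorsOfLength w (m + 1)) ≤ m) :
    ∃ w₁ w₂ w₃, w = w₁ ++ w₂ ++ w₃ ∧
      ∃ l, 0 < l ∧ ListHasPeriod w₂ l ∧ w₁.length + l + w₃.length ≤ m := by
  set v : ℕ → List α := fun t => (w.drop t).take m
  have hVset : Walk.vertexSet v (w.length - m) = factorsOfLength w m := rfl
  have hEset : Walk.edgeSet v (w.length - m) ⊆
      (factorsOfLength w (m + 1)).image fun u => (u.take m, u.drop 1) := by
    intro e he
    obtain ⟨t, ht, rfl⟩ := Walk.mem_edgeSet.mp he
    refine mem_image.mpr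
      ⟨(w.drop t).take (m + 1), mem_image_of_mem _ (mem_range.mpr (by omega)), ?_⟩
    simp [v, List.take_take, List.drop_take, List.drop_drop]
  have hEcard : #(Walk.edgeSet v (w.length - m)) ≤ m :=
    (card_le_card hEset).trans (card_image_le.trans hE)
  obtain ⟨s, l, b, hl, hsb, hbN, hper, hcount⟩ :=
    Walk.exists_periodic_of_card_edgeSet_le (v := v) (N := w.length - m)
      (hEcard.trans (hVset ▸ hV)) (by omega)
  refine ⟨w.take s, (w.drop s).take (b + m - s), (w.drop s).drop (b + m - s), by
    rw [List.append_assoc, List.take_append_drop, List.take_append_drop], l, hl,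
    listHasPeriod_take_drop hm hsb hper, ?_⟩
  simp only [List.length_take, List.length_drop]
  omega

end Factors

theorem stmt3_general {α : Type*} [Fintype α] (W : Set (List α))
    (hW : ∀ w ∈ W, ∀ u : List α, u <:+: w → u ∈ W)
    (d : ℕ)
    (hcount : {w ∈ W | w.length = d}.ncard ≤ d - 1)
    (w : List α) (hw : w ∈ W) (hlen : 2 * d - 1 ≤ w.length) :
    ∃ w₁ w₂ w₃ : List α, w = w₁ ++ w₂ ++ w₃ ∧
      ∃ p : ℕ, 0 < p ∧ p ≤ d - 1 ∧
        ListHasPeriod w₂ p ∧ p < w₂.length ∧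
        (∀ p' : ℕ, 0 < p' → ListHasPeriod w₂ p' → p ≤ p') ∧
        p + d ≤ w₂.length ∧ w₁.length ≤ d - p ∧ w₃.length ≤ d - p := by
  classical
  have hsub : ↑(factorsOfLength w d) ⊆ {u ∈ W | u.length = d} := fun u hu => by
    obtain ⟨hinf, hu⟩ := isInfix_of_mem_factorsOfLength (by omega) hu
    exact ⟨hW w hw u hinf, hu⟩
  have hd : #(factorsOfLength w d) < d := by
    have := (Set.ncard_coe_finset _).symm.trans_le
      (Set.ncard_le_ncard hsub ((List.finite_length_eq α d).subset fun u hu => hu.2))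
    have := card_factorsOfLength_pos w d
    omega
  obtain ⟨m, hm, hmd, hV, hE⟩ :=
    exists_le_apply_and_apply_succ_le (fun j => #(factorsOfLength w j))
      (card_factorsOfLength_pos w 1) hd
  obtain ⟨w₁, w₂, w₃, rfl, l, hl, hper, hlen'⟩ :=
    exists_append_periodic_of_card_factorsOfLength w hm (by omega) hV hE
  obtain ⟨p, hp, hpl, hpper, hpmin⟩ := exists_minimal_period hl hper
  simp only [List.length_append] at hlen
  exact ⟨w₁, w₂, w₃, rfl, p, hp, by omega, hpper, by omega, hpmin, by omega, by omega, by omega⟩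

/-- The Claim inside the proof of Lemma 4.5: in a factor-closed set of words over a
finite alphabet containing at most `d - 1` words of length `d` (for some `d ≥ 3`),
every word of length at least `2d - 1` decomposes as `w₁ ++ w₂ ++ w₃` where `w₂` is
periodic of minimal period `p ≤ d - 1`, the length of `w₂` is at least `p + d`, and
`w₁`, `w₃` both have length at most `d - p`. -/
theorem stmt3 {α : Type*} [Fintype α] (W : Set (List α))
    (hW : ∀ w ∈ W, ∀ u : List α, u <:+: w → u ∈ W)
    (d : ℕ) (hd : 3 ≤ d)
    (hcount : {w ∈ W | w.length = d}.ncard ≤ d - 1)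
    (w : List α) (hw : w ∈ W) (hlen : 2 * d - 1 ≤ w.length) :
    ∃ w₁ w₂ w₃ : List α, w = w₁ ++ w₂ ++ w₃ ∧
      ∃ p : ℕ, 0 < p ∧ p ≤ d - 1 ∧
        ListHasPeriod w₂ p ∧ p < w₂.length ∧
        (∀ p' : ℕ, 0 < p' → ListHasPeriod w₂ p' → p ≤ p') ∧
        p + d ≤ w₂.length ∧ w₁.length ≤ d - p ∧ w₃.length ≤ d - p :=
  stmt3_general W hW d hcount w hw hlen
end

section
/- Let α be a finite alphabet and let W be a factor-closed set of words over α such that, for some integer d ≥ 3, the number of words in W of length d is at most d − 1. Then there exist positive real numbers a and b such that for all n ∈ ℕ, the number of words in W of length at most n is bounded above by a·n + b. -/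
/-!
Put `F = {w ∈ W | |w| = d}`, so `|F| < d` and every length-`d` factor of a word of `W` lies in
`F`. Among `d` consecutive length-`d` windows of such a word two coincide, so everything but its
last `d - 1` letters can be pumped periodically into an infinite word all of whose windows lie
in `F`. The finite factors of such infinite words form a factor-closed, right-extendable language
with fewer than `d` words of length `d`; by the Morse–Hedlund counting argument it has a level
`k < d` at which one-letter extensions are unique. Hence a word of `W` is determined by its
length, its prefix of length `d` and its suffix of length `d`, which leaves at most `(n + 1) C`
words of length at most `n`.
-/

open List

namespace FactorLanguage

variable {α : Type*}

def admissibleWords (F : Set (List α)) (d : ℕ) : Set (List α) :=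
  {w | ∀ i, i + d ≤ w.length → (w.drop i).take d ∈ F}

/-- The language of the one-sided shift with allowed `d`-blocks `F`. -/
def shiftLanguage (F : Set (List α)) (d : ℕ) : Set (List α) :=
  {u | ∃ Y : Stream' α, (∀ r, (Y.drop r).take d ∈ F) ∧ Y.take u.length = u}

section Counting

variable {L : Set (List α)}

theorem ncard_length_eq_lt_ncard_length_succ [Finite α]
    (hpre : ∀ v ∈ L, ∀ u, u <+: v → u ∈ L) (hext : ∀ u ∈ L, ∃ a, u ++ [a] ∈ L)
    {u : List α} {a b : α} (ha : u ++ [a] ∈ L) (hb : u ++ [b] ∈ L) (hab : a ≠ b) :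
    {v ∈ L | v.length = u.length}.ncard < {v ∈ L | v.length = u.length + 1}.ncard := by
  set S := {v ∈ L | v.length = u.length + 1}
  have hS : S.Finite := (List.finite_length_eq α _).subset fun v hv => hv.2
  have himage : dropLast '' S = {v ∈ L | v.length = u.length} := by
    ext v
    constructor
    · rintro ⟨w, ⟨hw, hwl⟩, rfl⟩
      exact ⟨hpre w hw _ (dropLast_prefix w), by simp [hwl]⟩
    · rintro ⟨hv, hvl⟩
      obtain ⟨c, hc⟩ := hext v hv
      exact ⟨v ++ [c], ⟨hc, by simp [hvl]⟩, dropLast_concat⟩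
  have hninj : ¬ Set.InjOn dropLast S := fun hinj =>
    hab (by simpa using hinj ⟨ha, by simp⟩ ⟨hb, by simp⟩ (by simp))
  rw [← himage]
  exact (Set.ncard_image_le hS).lt_of_ne fun h =>
    hninj (Set.injOn_of_ncard_image_eq h hS)

/-- Morse–Hedlund: if extensions were never unique below `d`, the number of words of length
`j` would grow by at least one at each step. -/
theorem exists_length_lt_extension_unique [Finite α]
    (hpre : ∀ v ∈ L, ∀ u, u <+: v → u ∈ L) (hext : ∀ u ∈ L, ∃ a, u ++ [a] ∈ L) {d : ℕ}
    (hd : {v ∈ L | v.length = d}.ncard < d) :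
    ∃ k < d, ∀ u a b, u.length = k → u ++ [a] ∈ L → u ++ [b] ∈ L → a = b := by
  by_contra! h
  have hgrowth : ∀ j ≤ d, j ≤ {v ∈ L | v.length = j}.ncard := by
    intro j
    induction j with
    | zero => simp
    | succ j ih =>
      intro hj
      obtain ⟨u, a, b, rfl, ha, hb, hab⟩ := h j (by omega)
      have := ncard_length_eq_lt_ncard_length_succ hpre hext ha hb hab
      have := ih (by omega)
      omega
  exact (hgrowth d le_rfl).not_gt hd

theorem eq_of_take_eq_of_extension_unique (hL : ∀ v ∈ L, ∀ u, u <:+: v → u ∈ L) {k : ℕ}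
    (huniq : ∀ u a b, u.length = k → u ++ [a] ∈ L → u ++ [b] ∈ L → a = b)
    {v v' : List α} (hv : v ∈ L) (hv' : v' ∈ L) (hlen : v.length = v'.length)
    (hk : v.take k = v'.take k) : v = v' := by
  induction v using List.reverseRecOn generalizing v' with
  | nil => exact (List.length_eq_zero_iff.mp hlen.symm).symm
  | append_singleton u a ih =>
    obtain ⟨u', b, rfl⟩ : ∃ u' b, v' = u' ++ [b] := by
      simpa using (eq_nil_or_concat v').resolve_left (by rintro rfl; simp at hlen)
    simp only [length_append, length_singleton, Nat.add_right_cancel_iff] at hlen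
    by_cases hshort : (u ++ [a]).length ≤ k
    · rw [← take_of_length_le hshort, hk, take_of_length_le (by simpa [hlen] using hshort)]
    have hku : k ≤ u.length := by simp at hshort; omega
    obtain rfl : u = u' := ih (hL _ hv _ (prefix_append u [a]).isInfix)
      (hL _ hv' _ (prefix_append u' [b]).isInfix) hlen
      (by rwa [take_append_of_le_length hku, take_append_of_le_length (hlen ▸ hku)] at hk)
    have hsuffix : ∀ c, u ++ [c] ∈ L → u.drop (u.length - k) ++ [c] ∈ L := fun c hc =>
      hL _ hc _ (by rw [← drop_append_of_le_length (by omega)]; exact (drop_suffix _ _).isInfix)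
    rw [huniq _ a b (by simp; omega) (hsuffix a hv) (hsuffix b hv')]

end Counting

namespace shiftLanguage

variable {F : Set (List α)} {d : ℕ} {u : List α}

theorem infix_mem (hu : u ∈ shiftLanguage F d) {v : List α} (hv : v <:+: u) :
    v ∈ shiftLanguage F d := by
  obtain ⟨Y, hY, hYu⟩ := hu
  obtain ⟨s, t, rfl⟩ := hv
  refine ⟨Y.drop s.length, fun r => by simpa [Stream'.drop_drop] using hY (s.length + r), ?_⟩
  have hsv : Y.take (s.length + v.length) = s ++ v := by
    rw [← min_eq_right (show s.length + v.length ≤ (s ++ v ++ t).length by simp),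
      ← Stream'.take_take, hYu, ← length_append, take_left]
  rw [Stream'.take_drop, hsv, drop_left]

theorem exists_append_singleton_mem (hu : u ∈ shiftLanguage F d) :
    ∃ a, u ++ [a] ∈ shiftLanguage F d := by
  obtain ⟨Y, hY, hYu⟩ := hu
  refine ⟨Y.get u.length, Y, hY, ?_⟩
  rw [length_append, length_singleton, Stream'.take_succ', hYu]

theorem mem_of_length_eq (hu : u ∈ shiftLanguage F d) (hd : u.length = d) : u ∈ F := by
  obtain ⟨Y, hY, hYu⟩ := hu
  have h := hY 0
  rwa [Stream'.drop_zero, ← hd, hYu] at h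

end shiftLanguage

def extendPeriodic (f : ℕ → α) (N q : ℕ) : Stream' α :=
  fun x => if x < N then f x else f (N - q + (x - (N - q)) % q)

theorem extendPeriodic_of_lt {f : ℕ → α} {N q x : ℕ} (h : x < N) :
    extendPeriodic f N q x = f x :=
  if_pos h

theorem extendPeriodic_add_period {f : ℕ → α} {N q s : ℕ} (hqN : q ≤ N)
    (hf : ∀ x, s ≤ x → x + q < N → f (x + q) = f x) {x : ℕ} (hx : s ≤ x) :
    extendPeriodic f N q (x + q) = extendPeriodic f N q x := by
  unfold extendPeriodic
  rcases lt_or_ge (x + q) N with h | h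
  · rw [if_pos h, if_pos (by omega), hf x hx h]
  rcases lt_or_ge x N with h' | h'
  · rw [if_neg (by omega), if_pos h', show x + q - (N - q) = x + q - N + q by omega,
      Nat.add_mod_right, Nat.mod_eq_of_lt (by omega)]
    congr 1
    omega
  · rw [if_neg (by omega), if_neg (by omega), show x + q - (N - q) = x - (N - q) + q by omega,
      Nat.add_mod_right]

variable {F : Set (List α)} {d : ℕ}

theorem take_mem_shiftLanguage_of_take_drop_eq {w : List α} (hw : w ∈ admissibleWords F d)
    {s t : ℕ} (hst : s < t) (ht : t + d ≤ w.length)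
    (heq : (w.drop s).take d = (w.drop t).take d) : w.take (t + d) ∈ shiftLanguage F d := by
  set f : ℕ → α := fun x => w.getD x (w[0]'(by omega))
  set Y := extendPeriodic f (t + d) (t - s)
  have hYw : Y.take (t + d) = w.take (t + d) := by
    apply ext_getElem (by simp; omega)
    intro i hi _
    rw [Stream'.length_take] at hi
    rw [Stream'.take_get, getElem_take]
    show extendPeriodic f (t + d) (t - s) i = _
    rw [extendPeriodic_of_lt hi]
    exact getD_eq_getElem _ _ (by omega)
  have hf : ∀ x, s ≤ x → x + (t - s) < t + d → f (x + (t - s)) = f x := by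
    intro x hsx hx
    have h := congrArg (·[x - s]?) heq
    simp only [getElem?_take, getElem?_drop, if_pos (show x - s < d by omega)] at h
    simp only [f, getD_eq_getElem?_getD]
    rw [show x + (t - s) = t + (x - s) by omega, ← h, show s + (x - s) = x by omega]
  have hwindow : ∀ r, (Y.drop r).take d ∈ F := by
    intro r
    induction r using Nat.strong_induction_on with
    | _ r ih =>
      rcases le_or_gt r t with hr | hr
      · rw [Stream'.take_drop, ← min_eq_right (show r + d ≤ t + d by omega), ← Stream'.take_take,
          hYw, take_take, min_eq_left (by omega), ← List.take_drop]
        exact hw r (by omega)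
      · have hshift : Y.drop r = Y.drop (r - (t - s)) := by
          ext i
          simp only [Stream'.get_drop]
          rw [show r + i = r - (t - s) + i + (t - s) by omega]
          exact extendPeriodic_add_period (by omega) hf (by omega)
        rw [hshift]
        exact ih _ (by omega)
  exact ⟨Y, hwindow, by rw [length_take, min_eq_left ht, hYw]⟩

theorem take_mem_shiftLanguage (hF : F.Finite) (hFd : F.ncard < d) {w : List α}
    (hw : w ∈ admissibleWords F d) (hn : 2 * d ≤ w.length + 1) :
    w.take (w.length + 1 - d) ∈ shiftLanguage F d := by
  set p := w.length + 1 - 2 * d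
  obtain ⟨i, hi, j, hj, hij, heq⟩ := Set.exists_ne_map_eq_of_ncard_lt_of_maps_to
    (s := Set.Iio d) (by simpa using hFd) (f := fun j => (w.drop (p + j)).take d)
    (fun j hj => hw _ (by simp at hj; omega)) hF
  wlog hlt : i < j generalizing i j
  · exact this j hj i hi hij.symm heq.symm (by omega)
  simp only [Set.mem_Iio] at hj
  have hpump :=
    take_mem_shiftLanguage_of_take_drop_eq hw (by omega : p + i < p + j) (by omega) heq
  exact shiftLanguage.infix_mem hpump (take_prefix_take_left (by omega)).isInfix

theorem injOn_length_take_drop [Finite α] (hF : F.Finite) (hFd : F.ncard < d) :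
    Set.InjOn (fun w : List α => (w.length, w.take d, w.drop (w.length - d)))
      (admissibleWords F d) := by
  intro w hw w' hw' h
  simp only [Prod.mk.injEq] at h
  obtain ⟨hlen, hpre, hsuf⟩ := h
  suffices w.take (w.length - d) = w'.take (w'.length - d) by
    rw [← take_append_drop (w.length - d) w, this, hsuf, take_append_drop]
  rw [← hlen]
  rcases le_or_gt (w.length - d) d with hshort | hlong
  · rw [← min_eq_left hshort, ← take_take, hpre, take_take]
  obtain ⟨k, hkd, huniq⟩ := exists_length_lt_extension_unique (L := shiftLanguage F d)
    (fun v hv u hu => shiftLanguage.infix_mem hv hu.isInfix)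
    (fun u hu => shiftLanguage.exists_append_singleton_mem hu)
    (hFd.trans_le' (Set.ncard_le_ncard (fun v hv => shiftLanguage.mem_of_length_eq hv.1 hv.2) hF))
  have hk : w.take k = w'.take k := by rw [← min_eq_left hkd.le, ← take_take, hpre, take_take]
  have hprefix := eq_of_take_eq_of_extension_unique (fun v hv u hu => shiftLanguage.infix_mem hv hu)
    huniq (take_mem_shiftLanguage hF hFd hw (by omega))
    (take_mem_shiftLanguage hF hFd hw' (by omega)) (by simp [hlen])
    (by rw [take_take, take_take, ← hlen, min_eq_left (by omega), hk])
  rw [← hlen] at hprefix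
  calc w.take (w.length - d) = (w.take (w.length + 1 - d)).take (w.length - d) := by
        rw [take_take, min_eq_left (by omega)]
    _ = w'.take (w.length - d) := by rw [hprefix, take_take, min_eq_left (by omega)]

end FactorLanguage

open FactorLanguage

/-- Word form of Theorem 4.11: if `W` is a factor-closed set of words over a finite
alphabet containing at most `d - 1` words of length `d` (for some `d ≥ 3`), then the
number of words in `W` of length at most `n` is bounded by `a * n + b` for some
positive reals `a`, `b`. -/
theorem stmt4 {α : Type*} [Fintype α] (W : Set (List α))
    (hW : ∀ w ∈ W, ∀ u : List α, u <:+: w → u ∈ W)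
    (d : ℕ) (hd : 3 ≤ d)
    (hcount : {w ∈ W | w.length = d}.ncard ≤ d - 1) :
    ∃ a b : ℝ, 0 < a ∧ 0 < b ∧
      ∀ n : ℕ, ({w ∈ W | w.length ≤ n}.ncard : ℝ) ≤ a * n + b := by
  set F := {w ∈ W | w.length = d}
  have hF : F.Finite := (List.finite_length_eq α d).subset fun w hw => hw.2
  have hWF : W ⊆ admissibleWords F d := fun w hw i hi =>
    ⟨hW w hw _ ((take_prefix d (w.drop i)).isInfix.trans (drop_suffix i w).isInfix),
      by simp; omega⟩
  set S := {l : List α | l.length ≤ d}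
  have hS : 0 < S.ncard := (Set.ncard_pos (List.finite_length_le α d)).mpr ⟨[], by simp⟩
  refine ⟨S.ncard * S.ncard, S.ncard * S.ncard, by positivity, by positivity, fun n => ?_⟩
  have hcard : {w ∈ W | w.length ≤ n}.ncard ≤ (n + 1) * (S.ncard * S.ncard) := by
    calc {w ∈ W | w.length ≤ n}.ncard ≤ (Set.Iic n ×ˢ S ×ˢ S).ncard :=
          Set.ncard_le_ncard_of_injOn _ (fun w hw => by simp [S, hw.2]; omega)
            ((injOn_length_take_drop hF (by omega)).mono fun w hw => hWF hw.1)
            ((Set.finite_Iic n).prod ((List.finite_length_le α d).prod (List.finite_length_le α d)))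
      _ = (n + 1) * (S.ncard * S.ncard) := by
          rw [Set.ncard_prod, Set.ncard_prod, Set.ncard_Iic_nat]
  calc ({w ∈ W | w.length ≤ n}.ncard : ℝ) ≤ ((n + 1) * (S.ncard * S.ncard) : ℕ) := by
        exact_mod_cast hcard
    _ = S.ncard * S.ncard * n + S.ncard * S.ncard := by push_cast; ring
end

section
/- Let α be a finite alphabet and let W be a factor-closed set of words over α. Let L := limsup_{n→∞} log(c(n))/log(n), where c(n) denotes the number of words in W of length at most n. Then L does not lie in the open interval (1, 2). -/
/-!
Write `p n` for the number of words of length `n` in `W`. If `p (k + 1) ≤ k + 1` for some `k`,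
every long word `w ∈ W` has at most `k + 1` factors of length `k + 1`. Cutting `w` after a
repeated `k`-window near its end makes every factor of length `≤ k` right-extendable, so the
factor counts of the cut word increase at each length that has a right special factor; hence
some length `j ≤ k` has none. Then the letter following a `j`-window is determined by the
window, and a repeated `j`-window near the start makes `w` periodic on all but a bounded
prefix and suffix. Such words are determined by bounded data, so `p` is bounded and
`c n = O(n)`, giving exponent `≤ 1`. Otherwise `p n > n` for all `n ≥ 1`, so `c n ≥ n² / 2`
and the exponent is `≥ 2` (or the limsup is Lean's junk value `0`, when the ratio is unbounded).
-/

open Filter Topology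

namespace WordGrowth

variable {α : Type*}

section Windows

def window (w : List α) (t j : ℕ) : List α := (w.drop t).take j

variable {w : List α} {t t' j k r : ℕ}

lemma length_window (h : t + j ≤ w.length) : (window w t j).length = j := by
  simp only [window, List.length_take, List.length_drop]
  omega

lemma window_isInfix (w : List α) (t j : ℕ) : window w t j <:+: w :=
  (List.take_prefix _ _).isInfix.trans (List.drop_suffix _ _).isInfix

lemma getElem?_window (c : ℕ) : (window w t j)[c]? = if c < j then w[t + c]? else none := by
  rw [window, List.getElem?_take, List.getElem?_drop]

lemma window_eq_window_iff : window w t j = window w t' j ↔ ∀ c < j, w[t + c]? = w[t' + c]? := by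
  rw [List.ext_getElem?_iff]
  refine ⟨fun h c hc => ?_, fun h c => ?_⟩
  · simpa [getElem?_window, hc] using h c
  · simp only [getElem?_window]
    split_ifs with hc
    exacts [h c hc, rfl]

lemma take_window (h : j ≤ k) : (window w t k).take j = window w t j := by
  rw [window, List.take_take, min_eq_left h, window]

lemma window_take (h : t + j ≤ r) : window (w.take r) t j = window w t j := by
  rw [window, List.drop_take, List.take_take, window, min_eq_left (by omega)]

end Windows

section Factors

variable [DecidableEq α] {v w : List α} {t j k Q : ℕ}

def factors (w : List α) (j : ℕ) : Finset (List α) :=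
  (Finset.range (w.length + 1 - j)).image (window w · j)

lemma mem_factors {u : List α} : u ∈ factors w j ↔ ∃ t, t + j ≤ w.length ∧ window w t j = u := by
  simp only [factors, Finset.mem_image, Finset.mem_range]
  exact exists_congr fun t => and_congr_left fun _ => by omega

lemma window_mem_factors (h : t + j ≤ w.length) : window w t j ∈ factors w j :=
  mem_factors.2 ⟨t, h, rfl⟩

lemma factors_take_subset (r : ℕ) : factors (w.take r) j ⊆ factors w j := by
  intro u hu
  obtain ⟨t, ht, rfl⟩ := mem_factors.1 hu
  rw [List.length_take] at ht
  rw [window_take (by omega)]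
  exact window_mem_factors (by omega)

lemma exists_lt_window_eq {a : ℕ} (hcard : (factors w j).card ≤ Q) (h : a + Q + j ≤ w.length) :
    ∃ t₁ t₂, t₁ < t₂ ∧ a ≤ t₁ ∧ t₂ ≤ a + Q ∧ window w t₁ j = window w t₂ j := by
  have hmaps : ∀ t ∈ Finset.Icc a (a + Q), window w t j ∈ factors w j := fun t ht =>
    window_mem_factors (by rw [Finset.mem_Icc] at ht; omega)
  obtain ⟨t₁, ht₁, t₂, ht₂, hne, heq⟩ :=
    Finset.exists_ne_map_eq_of_card_lt_of_maps_to (by rw [Nat.card_Icc]; omega) hmaps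
  rw [Finset.mem_Icc] at ht₁ ht₂
  rcases hne.lt_or_gt with hlt | hlt
  · exact ⟨t₁, t₂, hlt, ht₁.1, ht₂.2, heq⟩
  · exact ⟨t₂, t₁, hlt, ht₂.1, ht₁.2, heq.symm⟩

end Factors

section Periodicity

variable {v w : List α} {t j k Q : ℕ}

def NoRightSpecial (v : List α) (j : ℕ) : Prop :=
  ∀ t t', t + j < v.length → t' + j < v.length → window v t j = window v t' j →
    v[t + j]? = v[t' + j]?

def SuffixRecurs (v : List α) (k : ℕ) : Prop :=
  ∃ t, t + k < v.length ∧ window v t k = window v (v.length - k) k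

def HasPeriodOn (w : List α) (d a b : ℕ) : Prop :=
  ∀ s, a ≤ s → s + d < b → w[s]? = w[s + d]?

lemma SuffixRecurs.mono (h : SuffixRecurs v k) (hjk : j ≤ k) : SuffixRecurs v j := by
  obtain ⟨t, ht, heq⟩ := h
  refine ⟨t + (k - j), by omega, window_eq_window_iff.2 fun c hc => ?_⟩
  have := window_eq_window_iff.1 heq (k - j + c) (by omega)
  rwa [← add_assoc, show v.length - k + (k - j + c) = v.length - j + c by omega] at this

lemma hasPeriodOn_of_noRightSpecial (hns : NoRightSpecial v j) {d : ℕ}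
    (h : window v t j = window v (t + d) j) : HasPeriodOn v d t v.length := by
  intro s
  induction s using Nat.strong_induction_on with
  | _ s ih =>
  intro hts hsd
  by_cases hs : s < t + j
  · have := window_eq_window_iff.1 h (s - t) (by omega)
    rwa [Nat.add_sub_cancel' hts, add_right_comm, Nat.add_sub_cancel' hts] at this
  · have := hns (s - j) (s - j + d) (by omega) (by omega) <| window_eq_window_iff.2 fun c hc => by
      rw [add_right_comm]
      exact ih _ (by omega) (by omega) (by omega)
    rwa [Nat.sub_add_cancel (by omega), add_right_comm, Nat.sub_add_cancel (by omega)] at this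

variable [DecidableEq α]

lemma image_take_factors_succ (h : SuffixRecurs v j) :
    (factors v (j + 1)).image (List.take j) = factors v j := by
  ext u
  simp only [Finset.mem_image, mem_factors]
  constructor
  · rintro ⟨_, ⟨t, ht, rfl⟩, rfl⟩
    exact ⟨t, by omega, (take_window j.le_succ).symm⟩
  · rintro ⟨t, ht, rfl⟩
    obtain ⟨t', ht', heq⟩ : ∃ t', t' + j < v.length ∧ window v t' j = window v t j := by
      rcases ht.lt_or_eq with ht | ht
      · exact ⟨t, ht, rfl⟩
      · obtain ⟨t', ht', heq⟩ := h
        exact ⟨t', ht', by rw [heq, ← ht, Nat.add_sub_cancel]⟩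
    exact ⟨window v t' (j + 1), ⟨t', ht', rfl⟩, by rw [take_window j.le_succ, heq]⟩

lemma card_factors_lt_succ (hrec : SuffixRecurs v j) (hsp : ¬ NoRightSpecial v j) :
    (factors v j).card < (factors v (j + 1)).card := by
  rw [← image_take_factors_succ hrec]
  refine Finset.card_image_le.lt_of_ne fun hcard => ?_
  simp only [NoRightSpecial, not_forall] at hsp
  obtain ⟨t, t', ht, ht', heq, hne⟩ := hsp
  have hinj := Finset.card_image_iff.1 hcard
  refine hne (window_eq_window_iff.1 (hinj (window_mem_factors ht) (window_mem_factors ht') ?_)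
    j j.lt_succ_self)
  rwa [take_window j.le_succ, take_window j.le_succ]

lemma exists_noRightSpecial (hrec : SuffixRecurs v k)
    (hcard : (factors v (k + 1)).card ≤ k + 1) : ∃ j ≤ k, NoRightSpecial v j := by
  by_contra! hsp
  have key : ∀ j ≤ k + 1, j < (factors v j).card := by
    intro j hj
    induction j with
    | zero => exact Finset.card_pos.2 ⟨_, window_mem_factors (t := 0) (by simp)⟩
    | succ j ih =>
      have := card_factors_lt_succ (hrec.mono (by omega)) (hsp j (by omega))
      have := ih (by omega)
      omega
  exact (key (k + 1) le_rfl).not_ge hcard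

theorem exists_hasPeriodOn (hQ : ∀ j ≤ k, (factors w j).card ≤ Q)
    (hk : (factors w (k + 1)).card ≤ k + 1) (hlen : 2 * Q + k ≤ w.length) :
    ∃ a d, 0 < d ∧ a + d ≤ Q ∧ HasPeriodOn w d a (w.length - Q) := by
  obtain ⟨t₁, t₂, ht, ht₁, ht₂, heq⟩ :=
    exists_lt_window_eq (a := w.length - Q - k) (hQ k le_rfl) (by omega)
  set v := w.take (t₂ + k) with hv
  have hvlen : v.length = t₂ + k := by rw [hv, List.length_take]; omega
  have hrec : SuffixRecurs v k := ⟨t₁, by omega, by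
    rwa [hvlen, Nat.add_sub_cancel, window_take (by omega), window_take le_rfl]⟩
  obtain ⟨j, hj, hns⟩ :=
    exists_noRightSpecial hrec ((Finset.card_le_card (factors_take_subset _)).trans hk)
  obtain ⟨s₁, s₂, hs, -, hs₂, hseq⟩ := exists_lt_window_eq (w := v) (a := 0)
    ((Finset.card_le_card (factors_take_subset _)).trans (hQ j hj)) (by omega)
  refine ⟨s₁, s₂ - s₁, by omega, by omega, fun s h₁ h₂ => ?_⟩
  have := hasPeriodOn_of_noRightSpecial hns (d := s₂ - s₁)
    (by rwa [Nat.add_sub_cancel' hs.le]) s h₁ (by omega)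
  rwa [hv, List.getElem?_take, List.getElem?_take, if_pos (by omega), if_pos (by omega)] at this

end Periodicity

section PeriodicWords

lemma eq_of_hasPeriodOn {w₁ w₂ : List α} {a b d : ℕ} (hd : 0 < d)
    (htake : w₁.take (a + d) = w₂.take (a + d)) (hdrop : w₁.drop b = w₂.drop b)
    (h₁ : HasPeriodOn w₁ d a b) (h₂ : HasPeriodOn w₂ d a b) : w₁ = w₂ := by
  refine List.ext_getElem? fun s => ?_
  induction s using Nat.strong_induction_on with
  | _ s ih =>
  by_cases hs : s < a + d
  · simpa [List.getElem?_take, hs] using congrArg (·[s]?) htake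
  by_cases hb : b ≤ s
  · simpa [List.getElem?_drop, Nat.add_sub_cancel' hb] using congrArg (·[s - b]?) hdrop
  rw [← Nat.sub_add_cancel (show d ≤ s by omega), ← h₁ _ (by omega) (by omega),
    ← h₂ _ (by omega) (by omega)]
  exact ih _ (by omega)

lemma exists_ncard_hasPeriodOn_le [Finite α] (K R : ℕ) : ∃ B, ∀ N,
    {w : List α | w.length = N ∧ ∃ a d, 0 < d ∧ a + d ≤ K ∧ HasPeriodOn w d a (N - R)}.ncard
      ≤ B := by
  set T : Set (List α × List α × ℕ × ℕ) :=
    {u | u.length ≤ K} ×ˢ {u | u.length ≤ R} ×ˢ Set.Iic K ×ˢ Set.Iic K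
  have hT : T.Finite := (List.finite_length_le α K).prod
    ((List.finite_length_le α R).prod ((Set.finite_Iic K).prod (Set.finite_Iic K)))
  refine ⟨T.ncard, fun N => ?_⟩
  choose! a d hd had hper using fun w (hw : w.length = N ∧
    ∃ a d, 0 < d ∧ a + d ≤ K ∧ HasPeriodOn w d a (N - R)) => hw.2
  refine Set.ncard_le_ncard_of_injOn (fun w => (w.take K, w.drop (N - R), a w, d w))
    (fun w hw => ?_) (fun w₁ hw₁ w₂ hw₂ heq => ?_) hT
  · have := had w hw
    simp only [T, Set.mem_prod, Set.mem_ofPred_eq, Set.mem_Iic, List.length_take,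
      List.length_drop, hw.1]
    omega
  · simp only [Prod.mk.injEq] at heq
    obtain ⟨htake, hdrop, ha, hd'⟩ := heq
    have htake' := congrArg (List.take (a w₁ + d w₁)) htake
    rw [List.take_take, List.take_take, min_eq_left (had w₁ hw₁)] at htake'
    exact eq_of_hasPeriodOn (hd w₁ hw₁) htake' hdrop (hper w₁ hw₁)
      (by rw [ha, hd']; exact hper w₂ hw₂)

end PeriodicWords

section Languages

variable (W : Set (List α))

noncomputable def growth (n : ℕ) : ℕ := {w ∈ W | w.length ≤ n}.ncard

noncomputable def complexity (n : ℕ) : ℕ := {w ∈ W | w.length = n}.ncard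

variable {W}

lemma growth_zero : growth W 0 = complexity W 0 := by
  simp only [growth, complexity, Nat.le_zero]

variable [Finite α]

lemma growth_succ (n : ℕ) : growth W (n + 1) = growth W n + complexity W (n + 1) := by
  have hs : {w ∈ W | w.length ≤ n + 1} =
      {w ∈ W | w.length ≤ n} ∪ {w ∈ W | w.length = n + 1} := by
    ext w
    simp only [Set.mem_ofPred_eq, Set.mem_union, Nat.le_succ_iff, and_or_left]
  rw [growth, hs, Set.ncard_union_eq (Set.disjoint_left.2 fun w h₁ h₂ => by
      have := h₁.2; have := h₂.2; omega)
    ((List.finite_length_le α n).subset fun _ h => h.2)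
    ((List.finite_length_eq α _).subset fun _ h => h.2)]
  rfl

lemma complexity_le_growth {j n : ℕ} (h : j ≤ n) : complexity W j ≤ growth W n :=
  Set.ncard_le_ncard (fun _ hw => ⟨hw.1, hw.2.trans_le h⟩)
    ((List.finite_length_le α n).subset fun _ h => h.2)

lemma growth_le_of_forall_complexity_le {B : ℕ} (hB : ∀ N, complexity W N ≤ B) (n : ℕ) :
    growth W n ≤ (n + 1) * B := by
  induction n with
  | zero => simpa [growth_zero] using hB 0
  | succ n ih => rw [growth_succ, add_mul, one_mul]; exact add_le_add ih (hB _)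

lemma sq_le_two_mul_growth (h : ∀ k, k + 1 < complexity W (k + 1)) (n : ℕ) :
    n ^ 2 ≤ 2 * growth W n := by
  induction n with
  | zero => simp
  | succ n ih =>
    rw [growth_succ]
    nlinarith [h n]

lemma card_factors_le_complexity [DecidableEq α] (hW : ∀ w ∈ W, ∀ u, u <:+: w → u ∈ W)
    {w : List α} (hw : w ∈ W) (j : ℕ) : (factors w j).card ≤ complexity W j := by
  rw [← Set.ncard_coe_finset]
  refine Set.ncard_le_ncard (fun u hu => ?_) ((List.finite_length_eq α j).subset fun _ h => h.2)
  obtain ⟨t, ht, rfl⟩ := mem_factors.1 hu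
  exact ⟨hW w hw _ (window_isInfix w t j), length_window ht⟩

theorem exists_forall_complexity_le (hW : ∀ w ∈ W, ∀ u, u <:+: w → u ∈ W) {k : ℕ}
    (hk : complexity W (k + 1) ≤ k + 1) : ∃ B, ∀ N, complexity W N ≤ B := by
  classical
  set Q := growth W k
  obtain ⟨B, hB⟩ := exists_ncard_hasPeriodOn_le (α := α) Q Q
  refine ⟨max B (growth W (2 * Q + k)), fun N => ?_⟩
  rcases lt_or_ge N (2 * Q + k) with hN | hN
  · exact (complexity_le_growth hN.le).trans (le_max_right _ _)
  have hsub : {w ∈ W | w.length = N} ⊆ {w : List α | w.length = N ∧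
      ∃ a d, 0 < d ∧ a + d ≤ Q ∧ HasPeriodOn w d a (N - Q)} := by
    rintro w ⟨hw, rfl⟩
    exact ⟨rfl, exists_hasPeriodOn
      (fun j hj => (card_factors_le_complexity hW hw j).trans (complexity_le_growth hj))
      ((card_factors_le_complexity hW hw _).trans hk) hN⟩
  exact (Set.ncard_le_ncard hsub ((List.finite_length_eq α N).subset fun _ h => h.1)).trans
    ((hB N).trans (le_max_left _ _))

end Languages

section GrowthExponent

lemma tendsto_const_div_log (c : ℝ) : Tendsto (fun n : ℕ => c / Real.log n) atTop (𝓝 0) :=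
  tendsto_const_nhds.div_atTop (Real.tendsto_log_atTop.comp tendsto_natCast_atTop_atTop)

variable {u : ℕ → ℕ} {C d : ℕ}

lemma limsup_log_div_log_le (hu : ∀ᶠ n in atTop, u n ≤ C * n ^ d) :
    limsup (fun n => Real.log (u n) / Real.log n) atTop ≤ d := by
  have hg : Tendsto (fun n : ℕ => Real.log C / Real.log n + d) atTop (𝓝 d) := by
    simpa using (tendsto_const_div_log (Real.log C)).add_const (d : ℝ)
  have hle : ∀ᶠ n : ℕ in atTop,
      Real.log (u n) / Real.log n ≤ Real.log C / Real.log n + d := by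
    filter_upwards [hu, eventually_ge_atTop 2] with n hn h2
    have hlogn : 0 < Real.log n := Real.log_pos (by exact_mod_cast h2)
    rw [div_add' _ _ _ hlogn.ne', div_le_div_iff_of_pos_right hlogn]
    rcases (u n).eq_zero_or_pos with h0 | hpos
    · rw [h0, Nat.cast_zero, Real.log_zero]
      have := Real.log_natCast_nonneg C
      positivity
    · have hC : 0 < C := Nat.pos_of_mul_pos_right (hpos.trans_le hn)
      calc Real.log (u n) ≤ Real.log ((C * n ^ d : ℕ) : ℝ) :=
            Real.log_le_log (by exact_mod_cast hpos) (by exact_mod_cast hn)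
        _ = Real.log C + d * Real.log n := by
            push_cast
            rw [Real.log_mul (by positivity) (by positivity), Real.log_pow]
  calc limsup (fun n => Real.log (u n) / Real.log n) atTop
      ≤ limsup (fun n : ℕ => Real.log C / Real.log n + d) atTop :=
        limsup_le_limsup hle (isCoboundedUnder_le_of_le atTop fun n =>
          div_nonneg (Real.log_natCast_nonneg _) (Real.log_natCast_nonneg _))
          hg.isBoundedUnder_le
    _ = d := hg.limsup_eq

lemma le_limsup_log_div_log (hu : ∀ᶠ n in atTop, n ^ d ≤ C * u n) :
    limsup (fun n => Real.log (u n) / Real.log n) atTop = 0 ∨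
      d ≤ limsup (fun n => Real.log (u n) / Real.log n) atTop := by
  by_cases hb : IsBoundedUnder (· ≤ ·) atTop fun n => Real.log (u n) / Real.log n
  swap
  · exact Or.inl (Real.limsup_of_not_isBoundedUnder hb)
  have hg : Tendsto (fun n : ℕ => d - Real.log C / Real.log n) atTop (𝓝 d) := by
    simpa using (tendsto_const_div_log (Real.log C)).const_sub (d : ℝ)
  have hge : ∀ᶠ n : ℕ in atTop,
      d - Real.log C / Real.log n ≤ Real.log (u n) / Real.log n := by
    filter_upwards [hu, eventually_ge_atTop 2] with n hn h2
    have hlogn : 0 < Real.log n := Real.log_pos (by exact_mod_cast h2)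
    have hpos : 0 < C * u n := (pow_pos (by omega : 0 < n) d).trans_le hn
    rw [sub_div' hlogn.ne', div_le_div_iff_of_pos_right hlogn, sub_le_iff_le_add']
    calc d * Real.log n = Real.log ((n ^ d : ℕ) : ℝ) := by push_cast; rw [Real.log_pow]
      _ ≤ Real.log ((C * u n : ℕ) : ℝ) :=
          Real.log_le_log (by positivity) (by exact_mod_cast hn)
      _ = Real.log C + Real.log (u n) := by
          push_cast
          rw [Real.log_mul (by exact_mod_cast (Nat.pos_of_mul_pos_right hpos).ne')
            (by exact_mod_cast (Nat.pos_of_mul_pos_left hpos).ne')]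
  right
  calc (d : ℝ) = limsup (fun n : ℕ => d - Real.log C / Real.log n) atTop := hg.limsup_eq.symm
    _ ≤ _ := limsup_le_limsup hge hg.isCoboundedUnder_le hb

end GrowthExponent

end WordGrowth

open WordGrowth

/-- Bergman's gap theorem in the word setting: for a factor-closed set `W` of words over
a finite alphabet, the growth exponent `limsup log(c n) / log n`, where `c n` is the
number of words in `W` of length at most `n`, never lies strictly between `1` and `2`. -/
theorem stmt5 {α : Type*} [Fintype α] (W : Set (List α))
    (hW : ∀ w ∈ W, ∀ u : List α, u <:+: w → u ∈ W) :
    Filter.limsup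
        (fun n : ℕ => Real.log ({w ∈ W | w.length ≤ n}.ncard : ℝ) / Real.log n)
        Filter.atTop ∉ Set.Ioo (1 : ℝ) 2 := by
  change limsup (fun n => Real.log (growth W n) / Real.log n) atTop ∉ Set.Ioo (1 : ℝ) 2
  rintro ⟨h₁, h₂⟩
  by_cases hk : ∃ k, complexity W (k + 1) ≤ k + 1
  · obtain ⟨k, hk⟩ := hk
    obtain ⟨B, hB⟩ := exists_forall_complexity_le hW hk
    have hlin : ∀ᶠ n in atTop, growth W n ≤ 2 * B * n ^ 1 := by
      filter_upwards [eventually_ge_atTop 1] with n hn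
      nlinarith [growth_le_of_forall_complexity_le hB n]
    have := limsup_log_div_log_le hlin
    push_cast at this
    linarith
  · simp only [not_exists, not_le] at hk
    rcases le_limsup_log_div_log (Eventually.of_forall (sq_le_two_mul_growth hk)) with h | h
    · linarith
    · push_cast at h
      linarith
end

section
/- Let g : ℕ → ℝ be a sequence with g(n) ≥ 0 for all n. Suppose that limsup_{n→∞} log(∑_{i=0}^{n} g(i))/log(n) < 2. Then for all positive real numbers a and b, the set {n ∈ ℕ : g(n) < a·n − b} is infinite. -/
/-! If `g n < a * n - b` held only finitely often, then (using `g ≥ 0` for the finitely many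
exceptions) `a * n - B ≤ g n` for all `n` and some `B`, so the partial sums grow at least like
`a / 4 * n ^ 2`, which forces `limsup log (∑ g) / log n ≥ 2`. -/

open Filter Finset Real Topology

theorem exists_forall_mul_sub_le {g : ℕ → ℝ} {a b : ℝ} (hg : ∀ n, 0 ≤ g n) (ha : 0 ≤ a)
    (h : ∀ᶠ n in atTop, a * n - b ≤ g n) : ∃ B, ∀ n, a * n - B ≤ g n := by
  obtain ⟨N, hN⟩ := eventually_atTop.1 h
  refine ⟨max b (a * N), fun n => ?_⟩
  rcases le_or_gt N n with hNn | hnN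
  · linarith [hN n hNn, le_max_left b (a * N)]
  · have : a * n ≤ a * N := mul_le_mul_of_nonneg_left (by exact_mod_cast hnN.le) ha
    linarith [hg n, le_max_right b (a * N)]

theorem sum_range_succ_mul_sub (a B : ℝ) (n : ℕ) :
    ∑ i ∈ range (n + 1), (a * i - B) = a * n * (n + 1) / 2 - B * (n + 1) := by
  induction n with
  | zero => simp
  | succ n ih => rw [sum_range_succ, ih]; push_cast; ring

theorem eventually_mul_sq_le_sum_range_succ {g : ℕ → ℝ} {a B : ℝ} (ha : 0 < a)
    (h : ∀ n, a * n - B ≤ g n) :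
    ∀ᶠ n : ℕ in atTop, a / 4 * n ^ 2 ≤ ∑ i ∈ range (n + 1), g i := by
  filter_upwards [eventually_ge_atTop 1, eventually_ge_atTop ⌈8 * |B| / a⌉₊] with n hn1 hnB
  have hn1 : (1 : ℝ) ≤ n := by exact_mod_cast hn1
  have hnB : 8 * |B| ≤ a * n := by
    rw [← div_le_iff₀' ha]; exact (Nat.le_ceil _).trans (by exact_mod_cast hnB)
  have hsum := sum_le_sum fun i (_ : i ∈ range (n + 1)) => h i
  rw [sum_range_succ_mul_sub] at hsum
  nlinarith [le_abs_self B, abs_nonneg B]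

theorem le_limsup_log_div_log {S : ℕ → ℝ} {c p : ℝ} (hc : 0 < c)
    (h : ∀ᶠ n : ℕ in atTop, c * (n : ℝ) ^ p ≤ S n) :
    (p : EReal) ≤ limsup (fun n : ℕ => ((log (S n) / log n : ℝ) : EReal)) atTop := by
  have hlog : Tendsto (fun n : ℕ => log (n : ℝ)) atTop atTop :=
    tendsto_log_atTop.comp tendsto_natCast_atTop_atTop
  have hlower : Tendsto (fun n : ℕ => ((p + log c / log n : ℝ) : EReal)) atTop (𝓝 p) := by
    refine (continuous_coe_real_ereal.tendsto p).comp ?_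
    simpa [div_eq_mul_inv] using tendsto_const_nhds.add (hlog.inv_tendsto_atTop.const_mul (log c))
  rw [← hlower.limsup_eq]
  refine limsup_le_limsup ?_
  filter_upwards [h, eventually_gt_atTop 1] with n hn hn1
  have hn1 : (1 : ℝ) < n := by exact_mod_cast hn1
  have hlogn : 0 < log n := log_pos hn1
  have hpow : 0 < c * (n : ℝ) ^ p := by positivity
  have key : log c + p * log n ≤ log (S n) := by
    rw [← log_rpow (by linarith), ← log_mul hc.ne' (by positivity)]
    exact log_le_log hpow hn
  rw [EReal.coe_le_coe_iff, add_div' _ _ _ hlogn.ne', div_le_div_iff_of_pos_right hlogn]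
  linarith

/-- Sequence form of Lemma 4.7: if a nonnegative sequence `g` satisfies
`limsup log(∑_{i=0}^n g i) / log n < 2`, then for all positive reals `a`, `b` there are
infinitely many `n` with `g n < a * n - b`. -/
theorem stmt6 (g : ℕ → ℝ) (hg : ∀ n, 0 ≤ g n)
    (h : Filter.limsup
        (fun n : ℕ =>
          ((Real.log (∑ i ∈ Finset.range (n + 1), g i) / Real.log n : ℝ) : EReal))
        Filter.atTop < 2) :
    ∀ a b : ℝ, 0 < a → 0 < b → {n : ℕ | g n < a * n - b}.Infinite := by
  intro a b ha _ hfin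
  have hev : ∀ᶠ n in atTop, a * n - b ≤ g n := by
    simpa [Nat.cofinite_eq_atTop] using hfin.eventually_cofinite_notMem
  obtain ⟨B, hB⟩ := exists_forall_mul_sub_le hg ha.le hev
  have hquad : ∀ᶠ n : ℕ in atTop, a / 4 * (n : ℝ) ^ (2 : ℝ) ≤ ∑ i ∈ range (n + 1), g i := by
    simpa using eventually_mul_sq_le_sum_range_succ ha hB
  exact h.not_ge (le_limsup_log_div_log (by positivity) hquad)
end

section
/- Let f : ℕ → ℚ be a sequence such that (i) the set {n ∈ ℕ : f(n) ≠ 0} is infinite, and (ii) for every k ∈ ℕ there exist natural numbers i ≤ j with j − i ≥ k such that f(n) = 0 for all n with i ≤ n ≤ j. Then f is not P-recursive. -/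
/-!
Once the leading coefficient `c 0` has no more roots among the naturals, the recurrence
expresses `f n` as a combination of `f (n - 1), …, f (n - m)`. A run of `m` zeros beyond that
point therefore forces every later term to vanish, leaving only finitely many nonzero terms.
-/

/-- A sequence `f : ℕ → ℚ` is P-recursive if there are `m ∈ ℕ`, polynomials
`c 0, …, c m` with `c 0 ≠ 0`, and `N ≥ m` such that
`∑_{k=0}^{m} (c k)(n) * f (n - k) = 0` for all `n ≥ N`. -/
def PRecursive (f : ℕ → ℚ) : Prop :=
  ∃ (m : ℕ) (c : ℕ → Polynomial ℚ), c 0 ≠ 0 ∧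
    ∃ N : ℕ, m ≤ N ∧ ∀ n : ℕ, N ≤ n →
      ∑ k ∈ Finset.range (m + 1), (c k).eval (n : ℚ) * f (n - k) = 0

open Filter Finset Polynomial

theorem Polynomial.eventually_eval_natCast_ne_zero {R : Type*} [CommRing R] [IsDomain R]
    [CharZero R] {p : R[X]} (hp : p ≠ 0) : ∀ᶠ n : ℕ in atTop, p.eval (n : R) ≠ 0 := by
  rw [← Nat.cofinite_eq_atTop]
  exact ((finite_setOfPred_isRoot hp).preimage Nat.cast_injective.injOn).compl_mem_cofinite

section LinearRecurrence

variable {R : Type*} [Semiring R] [NoZeroDivisors R] {f : ℕ → R} {a : ℕ → ℕ → R} {m n : ℕ}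

theorem eq_zero_of_recurrence_of_eq_zero_prev
    (hrec : ∑ k ∈ range (m + 1), a k n * f (n - k) = 0) (ha : a 0 n ≠ 0)
    (hprev : ∀ k, 1 ≤ k → k ≤ m → f (n - k) = 0) : f n = 0 := by
  have hsum : ∑ k ∈ range (m + 1), a k n * f (n - k) = a 0 n * f n := by
    rw [sum_eq_single_of_mem 0 (mem_range.mpr m.succ_pos), Nat.sub_zero]
    intro k hk hk0
    rw [hprev k (Nat.one_le_iff_ne_zero.mpr hk0) (Nat.lt_succ_iff.mp (mem_range.mp hk)),
      mul_zero]
  rw [hsum] at hrec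
  exact (mul_eq_zero.mp hrec).resolve_left ha

theorem eq_zero_of_recurrence_of_eq_zero_on_window {N i : ℕ}
    (hrec : ∀ n ≥ N, ∑ k ∈ range (m + 1), a k n * f (n - k) = 0)
    (ha : ∀ n ≥ N, a 0 n ≠ 0) (hN : N ≤ i + m)
    (hwindow : ∀ n, i ≤ n → n < i + m → f n = 0) : ∀ n ≥ i, f n = 0 := by
  intro n
  induction n using Nat.strong_induction_on with
  | _ n ih =>
    intro hin
    by_cases hn : n < i + m
    · exact hwindow n hin hn
    · exact eq_zero_of_recurrence_of_eq_zero_prev (hrec n (by omega)) (ha n (by omega))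
        fun k hk1 hkm => ih (n - k) (by omega) (by omega)

end LinearRecurrence

/-- Lemma 6.1: a sequence with infinitely many nonzero terms, whose runs of consecutive
zeros have unbounded length, is not P-recursive. -/
theorem stmt7 (f : ℕ → ℚ)
    (h1 : {n : ℕ | f n ≠ 0}.Infinite)
    (h2 : ∀ k : ℕ, ∃ i j : ℕ, i ≤ j ∧ k ≤ j - i ∧ ∀ n : ℕ, i ≤ n → n ≤ j → f n = 0) :
    ¬ PRecursive f := by
  rintro ⟨m, c, hc0, N, -, hrec⟩
  obtain ⟨M, hM⟩ := eventually_atTop.mp (eventually_eval_natCast_ne_zero hc0)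
  obtain ⟨i, j, -, hlen, hzero⟩ := h2 (m + max N M)
  have htail : ∀ n ≥ j - m, f n = 0 :=
    eq_zero_of_recurrence_of_eq_zero_on_window (a := fun k n => (c k).eval (n : ℚ))
      (fun n hn => hrec n (le_of_max_le_left hn)) (fun n hn => hM n (le_of_max_le_right hn))
      (by omega) (fun n hn hnj => hzero n (by omega) (by omega))
  refine h1 ((Set.finite_Iio (j - m)).subset fun n hn => ?_)
  by_contra hge
  exact hn (htail n (not_lt.mp hge))
end

section
/- Let Λ := {n ∈ ℕ : there exists m ∈ ℕ with (2m+1)^{2m+1} + 1 ≤ n ≤ (2m+2)^{2m+2} + 1}, and define δ : ℕ → ℚ by δ(n) = 0 if n ∈ Λ and δ(n) = 1 otherwise. Then δ is not P-recursive. -/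
/-!
If `∑_{k=0}^{m} c_k(n) f(n-k) = 0` and `f(n-1) = ⋯ = f(n-m) = 0 ≠ f(n)`, then `c_0(n) = 0`.
A sequence that has, for every `m`, infinitely many such `n` would therefore force the
leading coefficient `c_0` to have infinitely many roots. For the indicator `δ` of the
complement of `Λ`, the points `n = (2j+2)^{2j+2} + 2` just after a block of `Λ` work:
`n - 1, …, n - j` all lie in the block ending at `n - 1`, since that block starts below
`n / 2`, while the next block starts only at `(2j+3)^{2j+3} + 1 > n`.
-/

open Filter Finset

theorem eval_coeff_zero_eq_zero_of_gap {f : ℕ → ℚ} {m : ℕ} {c : ℕ → Polynomial ℚ} {n : ℕ}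
    (hrec : ∑ k ∈ range (m + 1), (c k).eval (n : ℚ) * f (n - k) = 0)
    (hn : f n ≠ 0) (hgap : ∀ k ∈ Icc 1 m, f (n - k) = 0) :
    (c 0).eval (n : ℚ) = 0 := by
  have hshift : ∀ i ∈ range m, (c (i + 1)).eval (n : ℚ) * f (n - (i + 1)) = 0 := fun i hi => by
    rw [hgap (i + 1) (mem_Icc.mpr ⟨by omega, by simpa using hi⟩), mul_zero]
  rw [sum_range_succ', sum_eq_zero hshift, zero_add, Nat.sub_zero] at hrec
  exact (mul_eq_zero.mp hrec).resolve_right hn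

theorem not_pRecursive_of_frequently_gap {f : ℕ → ℚ}
    (h : ∀ m, ∃ᶠ n in atTop, f n ≠ 0 ∧ ∀ k ∈ Icc 1 m, f (n - k) = 0) :
    ¬ PRecursive f := by
  rintro ⟨m, c, hc0, N, -, hrec⟩
  set S := {n : ℕ | N ≤ n ∧ f n ≠ 0 ∧ ∀ k ∈ Icc 1 m, f (n - k) = 0}
  have hS : S.Infinite :=
    Nat.frequently_atTop_iff_infinite.mp ((h m).and_eventually (eventually_ge_atTop N)
      |>.mono fun n ⟨hgap, hN⟩ => ⟨hN, hgap⟩)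
  refine hc0 (Polynomial.eq_zero_of_infinite_isRoot _ ?_)
  refine (hS.image Nat.cast_injective.injOn).mono ?_
  rintro _ ⟨n, ⟨hN, hn, hgap⟩, rfl⟩
  exact eval_coeff_zero_eq_zero_of_gap (hrec n hN) hn hgap

def Λ : Set ℕ :=
  {n | ∃ m : ℕ, (2 * m + 1) ^ (2 * m + 1) + 1 ≤ n ∧ n ≤ (2 * m + 2) ^ (2 * m + 2) + 1}

theorem mul_pow_self_le_succ_pow_succ {a b : ℕ} (hb : b ≤ a + 1) :
    b * a ^ a ≤ (a + 1) ^ (a + 1) := by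
  rw [pow_succ']
  exact Nat.mul_le_mul hb (Nat.pow_le_pow_left a.le_succ a)

theorem add_two_notMem_Λ (j : ℕ) : (2 * j + 2) ^ (2 * j + 2) + 2 ∉ Λ := by
  rintro ⟨m, hlow, hhigh⟩
  rcases le_or_gt m j with hmj | hjm
  · have : (2 * m + 2) ^ (2 * m + 2) ≤ (2 * j + 2) ^ (2 * j + 2) :=
      Nat.pow_self_mono (by omega)
    omega
  · have hnext : (2 * j + 3) ^ (2 * j + 3) ≤ (2 * m + 1) ^ (2 * m + 1) :=
      Nat.pow_self_mono (by omega)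
    have hgrowth : 3 * (2 * j + 2) ^ (2 * j + 2) ≤ (2 * j + 3) ^ (2 * j + 3) :=
      mul_pow_self_le_succ_pow_succ (by omega)
    have hpos : 1 ≤ (2 * j + 2) ^ (2 * j + 2) := Nat.one_le_pow _ _ (by omega)
    omega

theorem add_two_sub_mem_Λ {j k : ℕ} (hk : k ∈ Icc 1 j) :
    (2 * j + 2) ^ (2 * j + 2) + 2 - k ∈ Λ := by
  obtain ⟨hk1, hkj⟩ := mem_Icc.mp hk
  refine ⟨j, ?_, by omega⟩
  have hgrowth : 2 * (2 * j + 1) ^ (2 * j + 1) ≤ (2 * j + 2) ^ (2 * j + 2) :=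
    mul_pow_self_le_succ_pow_succ (by omega)
  have hbase : 2 * j + 1 ≤ (2 * j + 1) ^ (2 * j + 1) := Nat.le_self_pow (by omega) _
  omega

/-- Example 6.2: the indicator sequence `δ` of the complement of
`Λ = ⋃_m [(2m+1)^{2m+1} + 1, (2m+2)^{2m+2} + 1]` is not P-recursive. -/
theorem stmt8 (δ : ℕ → ℚ)
    (hδ0 : ∀ n : ℕ,
      (∃ m : ℕ, (2 * m + 1) ^ (2 * m + 1) + 1 ≤ n ∧ n ≤ (2 * m + 2) ^ (2 * m + 2) + 1) →
      δ n = 0)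
    (hδ1 : ∀ n : ℕ,
      ¬ (∃ m : ℕ, (2 * m + 1) ^ (2 * m + 1) + 1 ≤ n ∧ n ≤ (2 * m + 2) ^ (2 * m + 2) + 1) →
      δ n = 1) :
    ¬ PRecursive δ := by
  refine not_pRecursive_of_frequently_gap fun m => frequently_atTop.mpr fun N => ?_
  set j := max m N
  refine ⟨(2 * j + 2) ^ (2 * j + 2) + 2, ?_, ?_, fun k hk => hδ0 _ ?_⟩
  · have : 2 * j + 2 ≤ (2 * j + 2) ^ (2 * j + 2) := Nat.le_self_pow (by omega) _
    omega
  · rw [hδ1 _ (add_two_notMem_Λ j)]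
    exact one_ne_zero
  · exact add_two_sub_mem_Λ (Icc_subset_Icc_right (le_max_left m N) hk)
end

section
/- Let f : ℕ → ℚ be a sequence. Then f is P-recursive if and only if the sequence n ↦ f(n)/n! is P-recursive. -/
open Polynomial Finset Nat

namespace PRecursive

theorem of_rescaled_recurrence {f g : ℕ → ℚ} {m N : ℕ} {c d : ℕ → ℚ[X]} (w : ℕ → ℚ)
    (hmN : m ≤ N) (hd₀ : d 0 ≠ 0)
    (hf : ∀ n, N ≤ n → ∑ k ∈ range (m + 1), (c k).eval (n : ℚ) * f (n - k) = 0)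
    (hdc : ∀ n, N ≤ n → ∀ k ≤ m,
      (d k).eval (n : ℚ) * g (n - k) = w n * ((c k).eval (n : ℚ) * f (n - k))) :
    PRecursive g := by
  refine ⟨m, d, hd₀, N, hmN, fun n hn => ?_⟩
  rw [sum_congr rfl fun k hk => hdc n hn k (Nat.lt_succ_iff.mp (mem_range.mp hk)), ← mul_sum,
    hf n hn, mul_zero]

theorem mul_factorial {g : ℕ → ℚ} (hg : PRecursive g) :
    PRecursive fun n => g n * (n ! : ℚ) := by
  obtain ⟨m, c, hc₀, N, hmN, hg⟩ := hg
  refine of_rescaled_recurrence (d := fun k => c k * descPochhammer ℚ k) (fun n => (n ! : ℚ))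
    hmN (by simpa using hc₀) hg fun n hn k hk => ?_
  rw [eval_mul, descPochhammer_eval_eq_descFactorial,
    ← factorial_mul_descFactorial (hk.trans (hmN.trans hn))]
  push_cast
  ring

theorem div_factorial {g : ℕ → ℚ} (hg : PRecursive g) :
    PRecursive fun n => g n / (n ! : ℚ) := by
  obtain ⟨m, c, hc₀, N, hmN, hg⟩ := hg
  refine of_rescaled_recurrence
    (d := fun k => c k * (descPochhammer ℚ (m - k)).comp (X - C (k : ℚ)))
    (fun n => ((n - m)! : ℚ)⁻¹) hmN
    (by simpa using mul_ne_zero hc₀ (monic_descPochhammer ℚ m).ne_zero) hg fun n hn k hk => ?_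
  have hkn : k ≤ n := hk.trans (hmN.trans hn)
  have hfac := factorial_mul_descFactorial (n := n - k) (k := m - k) (by omega)
  rw [show n - k - (m - k) = n - m by omega] at hfac
  have hdesc : (n - k).descFactorial (m - k) ≠ 0 :=
    right_ne_zero_of_mul (hfac ▸ factorial_ne_zero _)
  rw [eval_mul, eval_comp, eval_sub, eval_X, eval_C, ← Nat.cast_sub hkn,
    descPochhammer_eval_eq_descFactorial, ← hfac]
  push_cast
  field_simp

end PRecursive

/-- Claim (E6.0.3): `f` is P-recursive if and only if `n ↦ f n / n!` is P-recursive. -/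
theorem stmt9 (f : ℕ → ℚ) :
    PRecursive f ↔ PRecursive (fun n => f n / (Nat.factorial n : ℚ)) := by
  refine ⟨PRecursive.div_factorial, fun h => ?_⟩
  simpa [div_mul_cancel₀, Nat.factorial_ne_zero] using h.mul_factorial
end

section
/- Let q be a real number with 1/2 < q < 1 and define f : ℕ → ℝ by f(0) = 1, f(1) = 2, and f(n) = 1 + n + (⌊n^q⌋ − 1)·⌊n^q⌋/2 for n ≥ 2, where ⌊n^q⌋ denotes the integer floor of the real number n^q. Then limsup_{n→∞} log(∑_{i=0}^{n} f(i))/log(n) = 1 + 2q. -/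
/-!
Write `x = i^q` and `m = ⌊x⌋`. From `x - 1 < m ≤ x` one gets `x²/8 ≤ 1 + m(m-1)/2 ≤ 1 + x²/2`,
so `i^(2q)/8 ≤ f i ≤ 2 + i + i^(2q)/2` for every `i`. Comparing `∑_{i ≤ n} i^(2q)` with
`∫₀ⁿ x^(2q) dx` bounds the partial sums below by a multiple of `n^(1+2q)`, and since `q ≥ 1/2`
forces `n ≤ n^(2q)`, they are bounded above by `7 n^(1+2q)`. Hence `log(∑ f i)/log n`
converges to `1 + 2q`, and the limsup is that limit.
-/

open Filter Topology Finset

theorem tendsto_log_div_log_of_le_of_le {S : ℕ → ℝ} {r c C : ℝ} (hc : 0 < c)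
    (hlow : ∀ᶠ n : ℕ in atTop, c * (n : ℝ) ^ r ≤ S n)
    (hup : ∀ᶠ n : ℕ in atTop, S n ≤ C * (n : ℝ) ^ r) :
    Tendsto (fun n : ℕ => Real.log (S n) / Real.log n) atTop (𝓝 r) := by
  have hlog : Tendsto (fun n : ℕ => Real.log n) atTop atTop :=
    Real.tendsto_log_atTop.comp tendsto_natCast_atTop_atTop
  have hlim (a : ℝ) : Tendsto (fun n : ℕ => a / Real.log n + r) atTop (𝓝 r) := by
    simpa using (tendsto_const_nhds.div_atTop hlog).add_const r
  have hlog_rpow {a : ℝ} (ha : 0 < a) {n : ℕ} (hn : 1 < n) :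
      Real.log (a * (n : ℝ) ^ r) / Real.log n = Real.log a / Real.log n + r := by
    have hlogn : 0 < Real.log n := Real.log_pos (by exact_mod_cast hn)
    rw [Real.log_mul ha.ne' (by positivity), Real.log_rpow (by positivity), add_div,
      mul_div_cancel_right₀ _ hlogn.ne']
  refine tendsto_of_tendsto_of_tendsto_of_le_of_le' (hlim (Real.log c)) (hlim (Real.log C)) ?_ ?_
  · filter_upwards [hlow, eventually_gt_atTop 1] with n hn hn1
    rw [← hlog_rpow hc hn1]
    have hlogn : 0 < Real.log n := Real.log_pos (by exact_mod_cast hn1)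
    gcongr
  · filter_upwards [hlow, hup, eventually_gt_atTop 1] with n hn hn' hn1
    have hnr : 0 < (n : ℝ) ^ r := by positivity
    have hS : 0 < S n := (mul_pos hc hnr).trans_le hn
    have hC : 0 < C := pos_of_mul_pos_left (hS.trans_le hn') hnr.le
    rw [← hlog_rpow hC hn1]
    have hlogn : 0 < Real.log n := Real.log_pos (by exact_mod_cast hn1)
    gcongr

theorem sq_div_eight_le_one_add_floor_choose_two {x : ℝ} (hx : 0 ≤ x) :
    x ^ 2 / 8 ≤ 1 + ((⌊x⌋ : ℝ) - 1) * ⌊x⌋ / 2 := by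
  have hm : x < ⌊x⌋ + 1 := Int.lt_floor_add_one x
  nlinarith [sq_nonneg ((⌊x⌋ : ℝ) - 1)]

theorem floor_choose_two_le_sq_div_two {x : ℝ} (hx : 0 ≤ x) :
    ((⌊x⌋ : ℝ) - 1) * ⌊x⌋ / 2 ≤ x ^ 2 / 2 := by
  have hm : (⌊x⌋ : ℝ) ≤ x := Int.floor_le x
  have hm0 : (0 : ℝ) ≤ ⌊x⌋ := by exact_mod_cast Int.floor_nonneg.mpr hx
  nlinarith

theorem rpow_add_one_div_le_sum_range_rpow {s : ℝ} (hs : 0 ≤ s) (n : ℕ) :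
    (n : ℝ) ^ (s + 1) / (s + 1) ≤ ∑ i ∈ range (n + 1), (i : ℝ) ^ s := by
  have hmono : MonotoneOn (fun x : ℝ => x ^ s) (Set.Icc 0 (0 + n)) :=
    fun a ha b _ hab => Real.rpow_le_rpow ha.1 hab hs
  have h := hmono.integral_le_sum
  rw [integral_rpow (Or.inl (by linarith)), zero_add, Real.zero_rpow (by positivity),
    sub_zero] at h
  rw [sum_range_succ']
  simp only [zero_add, Nat.cast_add, Nat.cast_one] at h
  push_cast
  linarith [Real.rpow_nonneg (le_refl (0 : ℝ)) s]

theorem rpow_two_mul_eq_sq_rpow {x : ℝ} (hx : 0 ≤ x) (q : ℝ) : x ^ (2 * q) = (x ^ q) ^ 2 := by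
  rw [mul_comm, Real.rpow_mul hx, Real.rpow_two]

section

variable {q : ℝ} {f : ℕ → ℝ}

theorem rpow_two_mul_div_eight_le (hq : 0 < q) (hf0 : f 0 = 1) (hf1 : f 1 = 2)
    (hf : ∀ n : ℕ, 2 ≤ n →
      f n = 1 + (n : ℝ) + ((⌊(n : ℝ) ^ q⌋ : ℝ) - 1) * (⌊(n : ℝ) ^ q⌋ : ℝ) / 2)
    (i : ℕ) : (i : ℝ) ^ (2 * q) / 8 ≤ f i := by
  match i with
  | 0 => simp [hf0, Real.zero_rpow (by positivity : 2 * q ≠ 0)]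
  | 1 => norm_num [hf1]
  | k + 2 =>
    have hx : (0 : ℝ) ≤ ((k + 2 : ℕ) : ℝ) ^ q := by positivity
    rw [hf _ le_add_self, rpow_two_mul_eq_sq_rpow (Nat.cast_nonneg _)]
    linarith [sq_div_eight_le_one_add_floor_choose_two hx]

theorem le_two_add_add_rpow_two_mul_div_two (hf0 : f 0 = 1) (hf1 : f 1 = 2)
    (hf : ∀ n : ℕ, 2 ≤ n →
      f n = 1 + (n : ℝ) + ((⌊(n : ℝ) ^ q⌋ : ℝ) - 1) * (⌊(n : ℝ) ^ q⌋ : ℝ) / 2)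
    (i : ℕ) : f i ≤ 2 + i + (i : ℝ) ^ (2 * q) / 2 := by
  match i with
  | 0 =>
    rw [hf0, Nat.cast_zero]
    linarith [Real.rpow_nonneg (le_refl (0 : ℝ)) (2 * q)]
  | 1 => norm_num [hf1]
  | k + 2 =>
    have hx : (0 : ℝ) ≤ ((k + 2 : ℕ) : ℝ) ^ q := by positivity
    rw [hf _ le_add_self, rpow_two_mul_eq_sq_rpow (Nat.cast_nonneg _)]
    linarith [floor_choose_two_le_sq_div_two hx]

theorem mul_rpow_le_sum_range (hq : 0 < q) (hf0 : f 0 = 1) (hf1 : f 1 = 2)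
    (hf : ∀ n : ℕ, 2 ≤ n →
      f n = 1 + (n : ℝ) + ((⌊(n : ℝ) ^ q⌋ : ℝ) - 1) * (⌊(n : ℝ) ^ q⌋ : ℝ) / 2)
    (n : ℕ) : 1 / (8 * (2 * q + 1)) * (n : ℝ) ^ (1 + 2 * q) ≤ ∑ i ∈ range (n + 1), f i :=
  calc 1 / (8 * (2 * q + 1)) * (n : ℝ) ^ (1 + 2 * q)
      = (n : ℝ) ^ (2 * q + 1) / (2 * q + 1) / 8 := by rw [add_comm (1 : ℝ)]; field_simp
    _ ≤ (∑ i ∈ range (n + 1), (i : ℝ) ^ (2 * q)) / 8 := by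
      gcongr; exact rpow_add_one_div_le_sum_range_rpow (by positivity) n
    _ = ∑ i ∈ range (n + 1), (i : ℝ) ^ (2 * q) / 8 := sum_div _ _ _
    _ ≤ ∑ i ∈ range (n + 1), f i :=
      sum_le_sum fun i _ => rpow_two_mul_div_eight_le hq hf0 hf1 hf i

theorem sum_range_le_mul_rpow (hq : 1 / 2 ≤ q) (hf0 : f 0 = 1) (hf1 : f 1 = 2)
    (hf : ∀ n : ℕ, 2 ≤ n →
      f n = 1 + (n : ℝ) + ((⌊(n : ℝ) ^ q⌋ : ℝ) - 1) * (⌊(n : ℝ) ^ q⌋ : ℝ) / 2)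
    {n : ℕ} (hn : 1 ≤ n) : ∑ i ∈ range (n + 1), f i ≤ 7 * (n : ℝ) ^ (1 + 2 * q) := by
  have hn' : (1 : ℝ) ≤ n := by exact_mod_cast hn
  have h2q : 1 ≤ 2 * q := by linarith
  have hone : 1 ≤ (n : ℝ) ^ (2 * q) := Real.one_le_rpow hn' (by linarith)
  have hself : (n : ℝ) ≤ (n : ℝ) ^ (2 * q) := Real.self_le_rpow_of_one_le hn' h2q
  calc ∑ i ∈ range (n + 1), f i ≤ ∑ _i ∈ range (n + 1), (2 + n + (n : ℝ) ^ (2 * q) / 2) := by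
        refine sum_le_sum fun i hi => (le_two_add_add_rpow_two_mul_div_two hf0 hf1 hf i).trans ?_
        have hin : (i : ℝ) ≤ n := by exact_mod_cast Nat.lt_succ_iff.mp (mem_range.mp hi)
        gcongr
    _ = (n + 1) * (2 + n + (n : ℝ) ^ (2 * q) / 2) := by
      rw [sum_const, card_range, nsmul_eq_mul]; push_cast; ring
    _ ≤ (2 * n) * (7 / 2 * (n : ℝ) ^ (2 * q)) := by gcongr <;> linarith
    _ = 7 * (n : ℝ) ^ (1 + 2 * q) := by
      rw [Real.rpow_add (by positivity), Real.rpow_one]; ring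

end

theorem stmt12_general (q : ℝ) (hq1 : 1 / 2 < q) (f : ℕ → ℝ)
    (hf0 : f 0 = 1) (hf1 : f 1 = 2)
    (hf : ∀ n : ℕ, 2 ≤ n →
      f n = 1 + (n : ℝ) + ((⌊(n : ℝ) ^ q⌋ : ℝ) - 1) * (⌊(n : ℝ) ^ q⌋ : ℝ) / 2) :
    limsup (fun n : ℕ => Real.log (∑ i ∈ Finset.range (n + 1), f i) / Real.log n)
      atTop = 1 + 2 * q := by
  have hq : 0 < q := by linarith
  refine Tendsto.limsup_eq (tendsto_log_div_log_of_le_of_le (c := 1 / (8 * (2 * q + 1))) (C := 7)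
    (by positivity) ?_ ?_)
  · exact .of_forall (mul_rpow_le_sum_range hq hf0 hf1 hf)
  · filter_upwards [eventually_ge_atTop 1] with n hn
    exact sum_range_le_mul_rpow hq1.le hf0 hf1 hf hn

/-- Example 3.5(3): for `1/2 < q < 1`, the sequence with `f 0 = 1`, `f 1 = 2` and
`f n = 1 + n + (⌊n^q⌋ - 1)⌊n^q⌋/2` for `n ≥ 2` has growth exponent
`limsup log(∑_{i=0}^n f i)/log n = 1 + 2q`. -/
theorem stmt12 (q : ℝ) (hq1 : 1 / 2 < q) (hq2 : q < 1) (f : ℕ → ℝ)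
    (hf0 : f 0 = 1) (hf1 : f 1 = 2)
    (hf : ∀ n : ℕ, 2 ≤ n →
      f n = 1 + (n : ℝ) + ((⌊(n : ℝ) ^ q⌋ : ℝ) - 1) * (⌊(n : ℝ) ^ q⌋ : ℝ) / 2) :
    limsup (fun n : ℕ => Real.log (∑ i ∈ Finset.range (n + 1), f i) / Real.log n)
      atTop = 1 + 2 * q :=
  stmt12_general q hq1 f hf0 hf1 hf
end

section
/- Let q be a real number with 1/2 < q < 1 and let n ≥ 2 be a natural number. Consider words w over the two-letter alphabet {0, 1} of length n satisfying: (i) w contains at most two occurrences of the letter 1, and (ii) for every factor u of w containing exactly two occurrences of the letter 1, if j denotes the number of letters of u lying strictly between the two occurrences of 1 (all of which are 0), then j ≥ |u| − ⌊|u|^q⌋, where |u| is the length of u and ⌊|u|^q⌋ is the integer floor of the real number |u|^q. Then the number of such words w equals 1 + n + (⌊n^q⌋ − 1)·⌊n^q⌋/2. -/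
/-!
A word with at most two letters `1` is determined by the lengths of its runs of `0`: it is
`0ⁿ`, `0ᵃ 1 0ᵇ`, or `0ᵃ 1 0ʲ 1 0ᵇ`. Only the last kind is constrained, and only through the
factor `u = w` itself: a factor of `0ᵃ 1 0ʲ 1 0ᵇ` with two `1`s has the same gap `j`, and
`m ↦ m - ⌊m^q⌋` is monotone for `q ≤ 1` because `(m + 1)^q ≤ m^q + 1`. So the admissible words
with two `1`s are those with `a + b + 2 ≤ ⌊n^q⌋`, and there are `C(⌊n^q⌋, 2)` of them.
-/

open Finset

theorem List.append_cons_inj_of_notMem_of_notMem {α : Type*} [DecidableEq α] {x : α}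
    {s s' v v' : List α} (hs : x ∉ s) (hs' : x ∉ s') (h : s ++ x :: v = s' ++ x :: v') :
    s = s' ∧ v = v' := by
  have hlen : s.length = s'.length := by
    simpa [List.idxOf_append_of_notMem hs, List.idxOf_append_of_notMem hs'] using
      congrArg (List.idxOf x) h
  obtain ⟨hss', hvv'⟩ := List.append_inj h hlen
  exact ⟨hss', (List.cons.inj hvv').2⟩

lemma Real.add_one_rpow_le {q x : ℝ} (hq : q ≤ 1) (hx : 0 ≤ x) : (x + 1) ^ q ≤ x ^ q + 1 := by
  rcases le_or_gt 0 q with hq0 | hq0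
  · simpa using Real.rpow_add_le_add_rpow hx zero_le_one hq0 hq
  rcases hx.eq_or_lt with rfl | hx
  · simp [Real.zero_rpow hq0.ne]
  · have := Real.rpow_le_rpow_of_nonpos hx (le_add_of_nonneg_right zero_le_one) hq0.le
    linarith

lemma monotone_natCast_sub_floor_rpow {q : ℝ} (hq : q ≤ 1) :
    Monotone fun m : ℕ => (m : ℤ) - ⌊(m : ℝ) ^ q⌋ := by
  refine monotone_nat_of_le_succ fun m => ?_
  have := (Int.floor_le_floor (Real.add_one_rpow_le hq m.cast_nonneg)).trans_eq
    (Int.floor_add_one _)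
  push_cast
  omega

lemma sum_range_pred_add_one_eq_choose_two (K : ℕ) :
    ∑ s ∈ range (K - 1), (s + 1) = K.choose 2 := by
  cases K with
  | zero => rfl
  | succ K =>
    rw [Nat.add_sub_cancel, Nat.choose_two_right, ← sum_range_id, sum_range_succ', add_zero]

namespace BinaryWord

def zeros (k : ℕ) : List (Fin 2) := List.replicate k 0

def withOne (a b : ℕ) : List (Fin 2) := zeros a ++ 1 :: zeros b

def withTwoOnes (a j b : ℕ) : List (Fin 2) := zeros a ++ 1 :: (zeros j ++ 1 :: zeros b)

@[simp] lemma length_zeros (k : ℕ) : (zeros k).length = k := List.length_replicate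

lemma one_notMem_zeros (k : ℕ) : 1 ∉ zeros k := by simp [zeros]

@[simp] lemma count_one_zeros (k : ℕ) : (zeros k).count 1 = 0 :=
  List.count_eq_zero.2 (one_notMem_zeros k)

@[simp] lemma length_withOne (a b : ℕ) : (withOne a b).length = a + b + 1 := by
  simp [withOne]; omega

@[simp] lemma count_one_withOne (a b : ℕ) : (withOne a b).count 1 = 1 := by
  simp [withOne, List.count_append]

@[simp] lemma length_withTwoOnes (a j b : ℕ) : (withTwoOnes a j b).length = a + j + b + 2 := by
  simp [withTwoOnes]; omega

@[simp] lemma count_one_withTwoOnes (a j b : ℕ) : (withTwoOnes a j b).count 1 = 2 := by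
  simp [withTwoOnes, List.count_append]

lemma exists_eq_zeros {l : List (Fin 2)} (h : 1 ∉ l) : ∃ k, l = zeros k := by
  refine ⟨l.length, List.eq_replicate_iff.2 ⟨rfl, fun b hb => ?_⟩⟩
  fin_cases b
  · rfl
  · exact absurd hb h

lemma zeros_append_cons_inj {a a' : ℕ} {v v' : List (Fin 2)}
    (h : zeros a ++ 1 :: v = zeros a' ++ 1 :: v') : a = a' ∧ v = v' := by
  obtain ⟨ha, rfl⟩ :=
    List.append_cons_inj_of_notMem_of_notMem (one_notMem_zeros a) (one_notMem_zeros a') h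
  exact ⟨by simpa using congrArg List.length ha, rfl⟩

lemma withOne_inj {a b a' b' : ℕ} (h : withOne a b = withOne a' b') : a = a' ∧ b = b' := by
  obtain ⟨rfl, h⟩ := zeros_append_cons_inj h
  exact ⟨rfl, by simpa using congrArg List.length h⟩

lemma withTwoOnes_inj {a j b a' j' b' : ℕ} (h : withTwoOnes a j b = withTwoOnes a' j' b') :
    a = a' ∧ j = j' ∧ b = b' := by
  obtain ⟨ha, h⟩ := zeros_append_cons_inj h
  obtain ⟨hj, h⟩ := zeros_append_cons_inj h
  exact ⟨ha, hj, by simpa using congrArg List.length h⟩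

lemma exists_eq_withOne {l : List (Fin 2)} (h : l.count 1 = 1) : ∃ a b, l = withOne a b := by
  have hmem : (1 : Fin 2) ∈ l := List.count_pos_iff.1 (by omega)
  obtain ⟨s, t, rfl⟩ := List.append_of_mem hmem
  simp only [List.count_append, List.count_cons_self] at h
  obtain ⟨a, rfl⟩ := exists_eq_zeros (List.count_eq_zero.1 (by omega : s.count 1 = 0))
  obtain ⟨b, rfl⟩ := exists_eq_zeros (List.count_eq_zero.1 (by omega : t.count 1 = 0))
  exact ⟨a, b, rfl⟩

lemma exists_eq_withTwoOnes {l : List (Fin 2)} (h : l.count 1 = 2) :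
    ∃ a j b, l = withTwoOnes a j b := by
  have hmem : (1 : Fin 2) ∈ l := List.count_pos_iff.1 (by omega)
  obtain ⟨s, t, rfl⟩ := List.append_of_mem hmem
  simp only [List.count_append, List.count_cons_self] at h
  by_cases hs : s.count 1 = 0
  · obtain ⟨a, rfl⟩ := exists_eq_zeros (List.count_eq_zero.1 hs)
    obtain ⟨j, b, rfl⟩ := exists_eq_withOne (by omega : t.count 1 = 1)
    exact ⟨a, j, b, rfl⟩
  · obtain ⟨a, j, rfl⟩ := exists_eq_withOne (by omega : s.count 1 = 1)
    obtain ⟨b, rfl⟩ := exists_eq_zeros (List.count_eq_zero.1 (by omega : t.count 1 = 0))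
    exact ⟨a, j, b, by simp [withOne, withTwoOnes]⟩

def FactorGapCondition (q : ℝ) (w : List (Fin 2)) : Prop :=
  ∀ x y z : List (Fin 2),
    (x ++ 1 :: (y ++ 1 :: z)) <:+: w →
    (x ++ 1 :: (y ++ 1 :: z)).count (1 : Fin 2) = 2 →
    ((x ++ 1 :: (y ++ 1 :: z)).length : ℤ) -
        ⌊((x ++ 1 :: (y ++ 1 :: z)).length : ℝ) ^ q⌋ ≤ (y.length : ℤ)

lemma factorGapCondition_of_count_le_one {q : ℝ} {w : List (Fin 2)} (h : w.count 1 ≤ 1) :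
    FactorGapCondition q w :=
  fun _ _ _ hu hc => absurd ((hu.count_le 1).trans h) (by omega)

lemma factorGapCondition_withTwoOnes_iff {q : ℝ} (hq : q ≤ 1) (a j b : ℕ) :
    FactorGapCondition q (withTwoOnes a j b) ↔
      ((a + j + b + 2 : ℕ) : ℤ) - ⌊((a + j + b + 2 : ℕ) : ℝ) ^ q⌋ ≤ j := by
  constructor
  · intro h
    have := h (zeros a) (zeros j) (zeros b) (List.infix_refl _) (count_one_withTwoOnes a j b)
    rwa [← withTwoOnes, length_withTwoOnes, length_zeros] at this
  · rintro hgap x y z hu hcount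
    obtain ⟨s, t, hst⟩ := hu
    have hw := congrArg (List.count 1) hst
    simp only [List.count_append, List.count_cons_self, count_one_withTwoOnes] at hw hcount
    have hsplit : (s ++ x) ++ 1 :: (y ++ 1 :: (z ++ t)) = withTwoOnes a j b := by
      rw [← hst]; simp
    obtain ⟨-, hsplit⟩ := List.append_cons_inj_of_notMem_of_notMem
      (List.count_eq_zero.1 (by simp only [List.count_append]; omega)) (one_notMem_zeros a) hsplit
    obtain ⟨rfl, -⟩ := List.append_cons_inj_of_notMem_of_notMem
      (List.count_eq_zero.1 (by omega)) (one_notMem_zeros j) hsplit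
    have hlen := congrArg List.length hst
    simp only [List.length_append, List.length_cons, length_zeros, length_withTwoOnes] at hlen
    rw [length_zeros]
    exact (monotone_natCast_sub_floor_rpow hq (by simp; omega)).trans hgap

/-- `K` stands for `⌊n^q⌋`; the word `0ᵃ 1 0ʲ 1 0ᵇ` is indexed by `s = a + b < K - 1` and by
`(a, b)` in the antidiagonal of `s`. -/
def admissibleWords (n K : ℕ) : Finset (List (Fin 2)) :=
  {zeros n} ∪ (range n).image (fun a => withOne a (n - 1 - a)) ∪
    ((range (K - 1)).sigma fun s => antidiagonal s).image
      fun p => withTwoOnes p.2.1 (n - 2 - p.1) p.2.2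

lemma mem_admissibleWords {n K : ℕ} (hK : K ≤ n) {w : List (Fin 2)} :
    w ∈ admissibleWords n K ↔ w = zeros n ∨ (∃ a b, a + b + 1 = n ∧ w = withOne a b) ∨
      ∃ a j b, a + j + b + 2 = n ∧ a + b + 2 ≤ K ∧ w = withTwoOnes a j b := by
  simp only [admissibleWords, mem_union, mem_singleton, mem_image, mem_range, mem_sigma,
    HasAntidiagonal.mem_antidiagonal, Sigma.exists, Prod.exists, or_assoc]
  refine or_congr_right (or_congr ?_ ?_)
  · constructor
    · rintro ⟨a, ha, rfl⟩
      exact ⟨a, n - 1 - a, by omega, rfl⟩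
    · rintro ⟨a, b, hab, rfl⟩
      exact ⟨a, by omega, by rw [show n - 1 - a = b by omega]⟩
  · constructor
    · rintro ⟨s, a, b, ⟨hs, rfl⟩, rfl⟩
      exact ⟨a, n - 2 - (a + b), b, by omega, by omega, rfl⟩
    · rintro ⟨a, j, b, hsum, hab, rfl⟩
      exact ⟨a + b, a, b, ⟨by omega, rfl⟩, by rw [show n - 2 - (a + b) = j by omega]⟩

lemma card_admissibleWords (n K : ℕ) : #(admissibleWords n K) = 1 + n + K.choose 2 := by
  have hone : #((range n).image fun a => withOne a (n - 1 - a)) = n := by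
    rw [card_image_of_injOn fun a _ a' _ h => (withOne_inj h).1, card_range]
  have htwo : #(((range (K - 1)).sigma fun s => antidiagonal s).image
      fun p => withTwoOnes p.2.1 (n - 2 - p.1) p.2.2) = K.choose 2 := by
    rw [card_image_of_injOn, card_sigma]
    · simp only [Finset.Nat.card_antidiagonal, sum_range_pred_add_one_eq_choose_two]
    · rintro ⟨s, a, b⟩ hp ⟨s', a', b'⟩ hp' h
      simp only [coe_sigma, Set.mem_sigma_iff, mem_coe, HasAntidiagonal.mem_antidiagonal] at hp hp'
      obtain ⟨rfl, -, rfl⟩ := withTwoOnes_inj h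
      obtain rfl : s = s' := hp.2.symm.trans hp'.2
      rfl
  rw [admissibleWords, card_union_of_disjoint, card_union_of_disjoint, card_singleton, hone, htwo]
  · simp only [disjoint_singleton_left, mem_image, not_exists, not_and]
    intro a _ h
    simpa using congrArg (List.count 1) h
  · simp only [disjoint_left, mem_union, mem_singleton, mem_image]
    rintro w (rfl | ⟨a, -, rfl⟩) ⟨p, -, h⟩ <;> simpa using congrArg (List.count 1) h

lemma setOf_eq_admissibleWords {q : ℝ} (hq : q ≤ 1) {n : ℕ} (hn : 1 ≤ n) :
    {w : List (Fin 2) | w.length = n ∧ w.count 1 ≤ 2 ∧ FactorGapCondition q w} =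
      ↑(admissibleWords n ⌊(n : ℝ) ^ q⌋.toNat) := by
  have hfloor_nonneg : 0 ≤ ⌊(n : ℝ) ^ q⌋ := Int.floor_nonneg.2 (by positivity)
  have hfloor_le : ⌊(n : ℝ) ^ q⌋ ≤ n := by
    simpa using Int.floor_le_floor (Real.rpow_le_self_of_one_le (Nat.one_le_cast.2 hn) hq)
  ext w
  rw [Set.mem_ofPred_eq, mem_coe, mem_admissibleWords (by omega)]
  constructor
  · rintro ⟨hlen, hcount, hgap⟩
    interval_cases hc : w.count 1
    · obtain ⟨k, rfl⟩ := exists_eq_zeros (List.count_eq_zero.1 hc)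
      exact Or.inl (by rw [← hlen, length_zeros])
    · obtain ⟨a, b, rfl⟩ := exists_eq_withOne hc
      exact Or.inr (Or.inl ⟨a, b, by simpa using hlen, rfl⟩)
    · obtain ⟨a, j, b, rfl⟩ := exists_eq_withTwoOnes hc
      rw [length_withTwoOnes] at hlen
      rw [factorGapCondition_withTwoOnes_iff hq, hlen] at hgap
      exact Or.inr (Or.inr ⟨a, j, b, hlen, by omega, rfl⟩)
  · rintro (rfl | ⟨a, b, hab, rfl⟩ | ⟨a, j, b, hajb, hab, rfl⟩)
    · exact ⟨by simp, by simp, factorGapCondition_of_count_le_one (by simp)⟩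
    · exact ⟨by simpa using hab, by simp, factorGapCondition_of_count_le_one (by simp)⟩
    · refine ⟨by simpa using hajb, by simp, (factorGapCondition_withTwoOnes_iff hq a j b).2 ?_⟩
      rw [hajb]
      omega

end BinaryWord

open BinaryWord in
theorem stmt13_general (q : ℝ) (hq2 : q < 1) (n : ℕ) (hn : 2 ≤ n) :
    (({w : List (Fin 2) | w.length = n ∧ w.count 1 ≤ 2 ∧
        ∀ x y z : List (Fin 2),
          (x ++ 1 :: (y ++ 1 :: z)) <:+: w →
          (x ++ 1 :: (y ++ 1 :: z)).count (1 : Fin 2) = 2 →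
          ((x ++ 1 :: (y ++ 1 :: z)).length : ℤ) -
              ⌊((x ++ 1 :: (y ++ 1 :: z)).length : ℝ) ^ q⌋ ≤ (y.length : ℤ)}.ncard : ℝ)) =
      1 + (n : ℝ) + ((⌊(n : ℝ) ^ q⌋ : ℝ) - 1) * (⌊(n : ℝ) ^ q⌋ : ℝ) / 2 := by
  have hK : ((⌊(n : ℝ) ^ q⌋.toNat : ℕ) : ℝ) = ⌊(n : ℝ) ^ q⌋ := by
    exact_mod_cast Int.toNat_of_nonneg (Int.floor_nonneg.2 (by positivity))
  change ({w | w.length = n ∧ w.count 1 ≤ 2 ∧ FactorGapCondition q w}.ncard : ℝ) = _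
  rw [setOf_eq_admissibleWords hq2.le (by omega), Set.ncard_coe_finset, card_admissibleWords]
  push_cast [Nat.cast_choose_two, hK]
  ring

/-- The dimension count of Example 3.5: for `1/2 < q < 1` and `n ≥ 2`, the number of
words `w` over the two-letter alphabet `Fin 2` of length `n` such that (i) `w` contains
at most two occurrences of the letter `1`, and (ii) every factor `u = x ++ 1 :: (y ++ 1 :: z)`
of `w` containing exactly two occurrences of `1` satisfies
`|u| - ⌊|u|^q⌋ ≤ j` where `j = |y|` is the number of letters strictly between the two
occurrences of `1`, equals `1 + n + (⌊n^q⌋ - 1)⌊n^q⌋/2`. -/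
theorem stmt13 (q : ℝ) (hq1 : 1 / 2 < q) (hq2 : q < 1) (n : ℕ) (hn : 2 ≤ n) :
    (({w : List (Fin 2) | w.length = n ∧ w.count 1 ≤ 2 ∧
        ∀ x y z : List (Fin 2),
          (x ++ 1 :: (y ++ 1 :: z)) <:+: w →
          (x ++ 1 :: (y ++ 1 :: z)).count (1 : Fin 2) = 2 →
          ((x ++ 1 :: (y ++ 1 :: z)).length : ℤ) -
              ⌊((x ++ 1 :: (y ++ 1 :: z)).length : ℝ) ^ q⌋ ≤ (y.length : ℤ)}.ncard : ℝ)) =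
      1 + (n : ℝ) + ((⌊(n : ℝ) ^ q⌋ : ℝ) - 1) * (⌊(n : ℝ) ^ q⌋ : ℝ) / 2 :=
  stmt13_general q hq2 n hn
end

section
/- Let u, v : ℕ → ℝ be nondecreasing sequences with u(n) ≥ 1 and v(n) ≥ 1 for all n, and let s and t be integers with s ≥ 1 and t ≥ 2. Suppose that for all n ≥ 1, v(n) ≤ u(n·t − (n − 1)) and u(n·t − (n − 1)) ≤ v(n·s). Then limsup_{n→∞} log(u(n))/log(n) = limsup_{n→∞} log(v(n))/log(n). -/
/-! If `f n ≤ g (c n)`, then `log f(n) ≤ log g(cn) ≤ b log(cn) = b log n + b log c` whenever the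
exponent of `g` at `cn` is at most `b`, and `b log c / log n → 0`; so rescaling the index by a
constant does not change the growth exponent `limsup log f(n) / log n`. Since `u` is monotone, the
hypotheses give `u n ≤ v (s n)` and `v n ≤ u (t n)`, and the two exponents bound each other. -/

open Filter Real

noncomputable def logGrowth (f : ℕ → ℝ) (n : ℕ) : ℝ := log (f n) / log n

lemma logGrowth_nonneg {f : ℕ → ℝ} (hf : ∀ n, 1 ≤ f n) (n : ℕ) : 0 ≤ logGrowth f n :=
  div_nonneg (log_nonneg (hf n)) (log_natCast_nonneg n)

lemma log_div_log_le_of_le {n c x y b : ℝ} (hn : 1 < n) (hc : 1 ≤ c) (hx : 0 < x) (hxy : x ≤ y)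
    (hy : log y / log (n * c) ≤ b) : log x / log n ≤ b + b * log c / log n := by
  have hlogn : 0 < log n := log_pos hn
  have hlognc : log (n * c) = log n + log c := log_mul (by positivity) (by positivity)
  have hlogc : 0 ≤ log c := log_nonneg hc
  have hlogy : log y ≤ b * (log n + log c) := by
    rwa [div_le_iff₀ (by rw [hlognc]; positivity), hlognc] at hy
  calc log x / log n ≤ b * (log n + log c) / log n := by gcongr; exact (log_le_log hx hxy).trans hlogy
    _ = b + b * log c / log n := by field_simp

section RescaledIndex

variable {f g : ℕ → ℝ} {c : ℕ}

lemma eventually_logGrowth_le_of_le_comp_mul (hc : 1 ≤ c) (hf : ∀ n, 1 ≤ f n)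
    (hfg : ∀ n, 1 ≤ n → f n ≤ g (n * c)) {b y : ℝ} (hg : ∀ᶠ n in atTop, logGrowth g n ≤ b)
    (hby : b < y) : ∀ᶠ n in atTop, logGrowth f n ≤ y := by
  have hmul : Tendsto (fun n : ℕ => n * c) atTop atTop :=
    tendsto_atTop_mono (fun n => Nat.le_mul_of_pos_right n hc) tendsto_id
  have hsmall : Tendsto (fun n : ℕ => b + b * log c / log n) atTop (nhds b) := by
    simpa using tendsto_const_nhds.add
      (tendsto_const_nhds.div_atTop (tendsto_log_atTop.comp tendsto_natCast_atTop_atTop))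
  filter_upwards [hmul.eventually hg, hsmall.eventually_le_const hby, eventually_ge_atTop 2]
    with n hgn hbn hn
  refine (log_div_log_le_of_le (by exact_mod_cast hn) (by exact_mod_cast hc)
    (by linarith [hf n]) (hfg n (by omega)) ?_).trans hbn
  simpa [logGrowth] using hgn

lemma isBoundedUnder_logGrowth_of_le_comp_mul (hc : 1 ≤ c) (hf : ∀ n, 1 ≤ f n)
    (hfg : ∀ n, 1 ≤ n → f n ≤ g (n * c)) (hg : IsBoundedUnder (· ≤ ·) atTop (logGrowth g)) :
    IsBoundedUnder (· ≤ ·) atTop (logGrowth f) := by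
  obtain ⟨b, hb⟩ := hg
  exact isBoundedUnder_of_eventually_le
    (eventually_logGrowth_le_of_le_comp_mul hc hf hfg hb (lt_add_one b))

lemma limsup_logGrowth_le_of_le_comp_mul (hc : 1 ≤ c) (hf : ∀ n, 1 ≤ f n)
    (hfg : ∀ n, 1 ≤ n → f n ≤ g (n * c)) (hg : IsBoundedUnder (· ≤ ·) atTop (logGrowth g)) :
    limsup (logGrowth f) atTop ≤ limsup (logGrowth g) atTop := by
  have hcobdd : IsCoboundedUnder (· ≤ ·) atTop (logGrowth f) :=
    isCoboundedUnder_le_of_le atTop (logGrowth_nonneg hf)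
  rw [limsup_le_iff' hcobdd (isBoundedUnder_logGrowth_of_le_comp_mul hc hf hfg hg)]
  intro y hy
  obtain ⟨b, hLb, hby⟩ := exists_between hy
  exact eventually_logGrowth_le_of_le_comp_mul hc hf hfg
    ((eventually_lt_of_limsup_lt hLb hg).mono fun _ => le_of_lt) hby

end RescaledIndex

theorem stmt14_general (u v : ℕ → ℝ) (hu : Monotone u)
    (hu1 : ∀ n, 1 ≤ u n) (hv1 : ∀ n, 1 ≤ v n)
    (s t : ℕ) (hs : 1 ≤ s) (ht : 2 ≤ t)
    (h1 : ∀ n : ℕ, 1 ≤ n → v n ≤ u (n * t - (n - 1)))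
    (h2 : ∀ n : ℕ, 1 ≤ n → u (n * t - (n - 1)) ≤ v (n * s)) :
    limsup (fun n : ℕ => Real.log (u n) / Real.log n) atTop =
      limsup (fun n : ℕ => Real.log (v n) / Real.log n) atTop := by
  have huv : ∀ n, 1 ≤ n → u n ≤ v (n * s) := fun n hn =>
    (hu (by have := Nat.mul_le_mul_left n ht; omega)).trans (h2 n hn)
  have hvu : ∀ n, 1 ≤ n → v n ≤ u (n * t) := fun n hn => (h1 n hn).trans (hu (Nat.sub_le _ _))
  have ht1 : 1 ≤ t := by omega
  change limsup (logGrowth u) atTop = limsup (logGrowth v) atTop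
  by_cases hbv : IsBoundedUnder (· ≤ ·) atTop (logGrowth v)
  · have hbu := isBoundedUnder_logGrowth_of_le_comp_mul hs hu1 huv hbv
    exact (limsup_logGrowth_le_of_le_comp_mul hs hu1 huv hbv).antisymm
      (limsup_logGrowth_le_of_le_comp_mul ht1 hv1 hvu hbu)
  · have hbu : ¬ IsBoundedUnder (· ≤ ·) atTop (logGrowth u) := fun hbu =>
      hbv (isBoundedUnder_logGrowth_of_le_comp_mul ht1 hv1 hvu hbu)
    rw [Real.limsup_of_not_isBoundedUnder hbu, Real.limsup_of_not_isBoundedUnder hbv]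

/-- Abstract sequence form of Lemma 3.3: if two nondecreasing sequences `u, v ≥ 1`
satisfy `v n ≤ u (n*t - (n-1)) ≤ v (n*s)` for all `n ≥ 1` (with `s ≥ 1`, `t ≥ 2`),
then they have the same growth exponent `limsup log(u n)/log n = limsup log(v n)/log n`. -/
theorem stmt14 (u v : ℕ → ℝ) (hu : Monotone u) (hv : Monotone v)
    (hu1 : ∀ n, 1 ≤ u n) (hv1 : ∀ n, 1 ≤ v n)
    (s t : ℕ) (hs : 1 ≤ s) (ht : 2 ≤ t)
    (h1 : ∀ n : ℕ, 1 ≤ n → v n ≤ u (n * t - (n - 1)))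
    (h2 : ∀ n : ℕ, 1 ≤ n → u (n * t - (n - 1)) ≤ v (n * s)) :
    limsup (fun n : ℕ => Real.log (u n) / Real.log n) atTop =
      limsup (fun n : ℕ => Real.log (v n) / Real.log n) atTop :=
  stmt14_general u v hu hu1 hv1 s t hs ht h1 h2
end

section
/- Let f : ℕ → ℝ be a nondecreasing sequence with f(n) ≥ 1 for all n. Then limsup_{n→∞} log(∑_{i=1}^{n} i·f(i−1))/log(n) = 1 + limsup_{n→∞} log(∑_{i=0}^{n} f(i))/log(n). -/
/-!
Write `S n = ∑_{i ≤ n} f i` and `T n = ∑_{i=1}^n i f(i-1)`. Since `f ≥ 0`, `T n ≤ n S n`; since `f`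
is nondecreasing, `n S n ≤ n (n+1) f n ≤ ∑_{i=n+1}^{2n} i f(i-1) ≤ T (2n)`. So `T` is squeezed
between `n ↦ n S n` and the same sequence at `2n`, and rescaling `n` by a constant factor does
not change a polynomial growth exponent, because `log (2n) / log n → 1`.
-/

open Filter Real Finset

noncomputable def polyGrowthSup (u : ℕ → ℝ) : EReal :=
  limsup (fun n : ℕ => ((log (u n) / log n : ℝ) : EReal)) atTop

lemma eventually_log_natCast_pos : ∀ᶠ n : ℕ in atTop, 0 < log n :=
  (tendsto_log_atTop.comp tendsto_natCast_atTop_atTop).eventually_gt_atTop 0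

section PolyGrowth

variable {u v : ℕ → ℝ}

lemma frequently_lt_log_of_lt_polyGrowthSup {a : ℝ} (h : (a : EReal) < polyGrowthSup u) :
    ∃ᶠ n : ℕ in atTop, a * log n < log (u n) :=
  ((frequently_lt_of_lt_limsup (by isBoundedDefault) h).and_eventually
    eventually_log_natCast_pos).mono fun _ ⟨hlt, hlog⟩ =>
      (lt_div_iff₀ hlog).1 (EReal.coe_lt_coe_iff.1 hlt)

lemma le_polyGrowthSup_of_frequently {a : ℝ} (h : ∃ᶠ n : ℕ in atTop, a * log n ≤ log (u n)) :
    (a : EReal) ≤ polyGrowthSup u :=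
  le_limsup_of_frequently_le' ((h.and_eventually eventually_log_natCast_pos).mono
    fun _ ⟨hle, hlog⟩ => EReal.coe_le_coe_iff.2 ((le_div_iff₀ hlog).2 hle))

lemma polyGrowthSup_le_one_add (hu : ∀ᶠ n in atTop, 0 < u n)
    (h : ∀ᶠ n in atTop, u n ≤ n * v n) : polyGrowthSup u ≤ 1 + polyGrowthSup v := by
  have hle : ∀ᶠ n : ℕ in atTop, ((log (u n) / log n : ℝ) : EReal) ≤
      1 + ((log (v n) / log n : ℝ) : EReal) := by
    filter_upwards [hu, h, eventually_log_natCast_pos, eventually_gt_atTop 0]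
      with n hun hn hlog hpos
    have hn0 : (0 : ℝ) < n := Nat.cast_pos.2 hpos
    have hvn : 0 < v n := pos_of_mul_pos_right (hun.trans_le hn) hn0.le
    have hlogu : log (u n) ≤ log n + log (v n) := by
      rw [← log_mul hn0.ne' hvn.ne']
      exact log_le_log hun hn
    rw [← EReal.coe_one, ← EReal.coe_add, EReal.coe_le_coe_iff, one_add_div hlog.ne']
    gcongr
  calc polyGrowthSup u
      ≤ limsup (fun n : ℕ => 1 + ((log (v n) / log n : ℝ) : EReal)) atTop :=
        limsup_le_limsup hle
    _ ≤ limsup (fun _ : ℕ => (1 : EReal)) atTop + polyGrowthSup v :=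
        EReal.limsup_add_le (.inl (by simpa using EReal.coe_ne_bot 1))
          (.inl (by simpa using EReal.coe_ne_top 1))
    _ = 1 + polyGrowthSup v := by rw [limsup_const]

lemma one_add_polyGrowthSup_le {k : ℕ} (hk : 0 < k) (hv : ∀ᶠ n in atTop, 0 < v n)
    (h : ∀ᶠ n in atTop, n * v n ≤ u (k * n)) : 1 + polyGrowthSup v ≤ polyGrowthSup u := by
  refine EReal.ge_of_forall_gt_iff_ge.1 fun a ha => ?_
  obtain ⟨b, hab, hb⟩ := EReal.exists_between_coe_real (EReal.sub_lt_of_lt_add' ha)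
  have hab : a < 1 + b := by
    rw [← EReal.coe_one, ← EReal.coe_sub, EReal.coe_lt_coe_iff] at hab
    linarith
  -- `(1 + b - a) log n` eventually absorbs the constant `a log k` coming from `log (k n)`.
  have hlarge : ∀ᶠ n : ℕ in atTop, a * log k ≤ (1 + b - a) * log n :=
    (tendsto_log_atTop.comp tendsto_natCast_atTop_atTop).eventually_ge_atTop
      (a * log k / (1 + b - a)) |>.mono fun _ hn =>
        ((div_le_iff₀ (by linarith)).1 hn).trans_eq (mul_comm _ _)
  have hscaled : ∃ᶠ n in atTop, a * log ↑(k * n) ≤ log (u (k * n)) := by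
    refine ((frequently_lt_log_of_lt_polyGrowthSup hb).and_eventually
      (hv.and (h.and (hlarge.and (eventually_gt_atTop 0))))).mono ?_
    rintro n ⟨hbn, hvn, hn, hlargen, hpos⟩
    have hn0 : (0 : ℝ) < n := Nat.cast_pos.2 hpos
    have hlogu : log n + log (v n) ≤ log (u (k * n)) := by
      rw [← log_mul hn0.ne' hvn.ne']
      exact log_le_log (mul_pos hn0 hvn) hn
    rw [Nat.cast_mul, log_mul (Nat.cast_pos.2 hk).ne' hn0.ne']
    linarith
  exact le_polyGrowthSup_of_frequently ((tendsto_id.const_mul_atTop' hk).frequently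
    (p := fun m : ℕ => a * log m ≤ log (u m)) hscaled)

end PolyGrowth

section WeightedSums

variable {f : ℕ → ℝ}

lemma sum_Icc_natCast_mul_le (hf : ∀ n, 0 ≤ f n) (n : ℕ) :
    ∑ i ∈ Icc 1 n, (i : ℝ) * f (i - 1) ≤ n * ∑ i ∈ range (n + 1), f i := by
  have hreindex : ∑ i ∈ Icc 1 n, f (i - 1) = ∑ i ∈ range n, f i := by
    rw [← Ico_add_one_right_eq_Icc, sum_Ico_eq_sum_range]
    simp
  calc ∑ i ∈ Icc 1 n, (i : ℝ) * f (i - 1)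
      ≤ ∑ i ∈ Icc 1 n, (n : ℝ) * f (i - 1) :=
        sum_le_sum fun i hi => by gcongr; exacts [hf _, (mem_Icc.1 hi).2]
    _ = n * ∑ i ∈ range n, f i := by rw [← mul_sum, hreindex]
    _ ≤ n * ∑ i ∈ range (n + 1), f i := by
        gcongr
        exacts [fun i _ _ => hf i, n.le_succ]

lemma natCast_mul_sum_range_le (hf : Monotone f) (hf0 : ∀ n, 0 ≤ f n) (n : ℕ) :
    n * ∑ i ∈ range (n + 1), f i ≤ ∑ i ∈ Icc 1 (2 * n), (i : ℝ) * f (i - 1) := by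
  calc (n : ℝ) * ∑ i ∈ range (n + 1), f i
      ≤ n * ((n + 1) * f n) := by
        gcongr
        simpa using sum_le_card_nsmul (range (n + 1)) f (f n)
          fun i hi => hf (Nat.lt_succ_iff.1 (mem_range.1 hi))
    _ = ∑ _i ∈ Icc (n + 1) (2 * n), ((n : ℝ) + 1) * f n := by
        rw [sum_const, Nat.card_Icc, show 2 * n + 1 - (n + 1) = n by omega, nsmul_eq_mul]
    _ ≤ ∑ i ∈ Icc (n + 1) (2 * n), (i : ℝ) * f (i - 1) :=
        sum_le_sum fun i hi => by
          have hi1 := (mem_Icc.1 hi).1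
          gcongr
          exacts [hf0 _, by exact_mod_cast hi1, hf (by omega)]
    _ ≤ ∑ i ∈ Icc 1 (2 * n), (i : ℝ) * f (i - 1) :=
        sum_le_sum_of_subset_of_nonneg (Icc_subset_Icc (by omega) le_rfl)
          fun i _ _ => mul_nonneg i.cast_nonneg (hf0 _)

end WeightedSums

/-- Key computation in the proof of Theorem 0.7(2): for a nondecreasing sequence
`f ≥ 1`, the growth exponent of `n ↦ ∑_{i=1}^n i * f (i-1)` is one more than the
growth exponent of `n ↦ ∑_{i=0}^n f i` (limsups taken in the extended reals, so that
the identity also covers the case of infinite growth exponents). -/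
theorem stmt15 (f : ℕ → ℝ) (hf : Monotone f) (hf1 : ∀ n, 1 ≤ f n) :
    limsup
        (fun n : ℕ =>
          ((Real.log (∑ i ∈ Finset.Icc 1 n, (i : ℝ) * f (i - 1)) / Real.log n : ℝ) :
            EReal))
        atTop =
      1 + limsup
        (fun n : ℕ =>
          ((Real.log (∑ i ∈ Finset.range (n + 1), f i) / Real.log n : ℝ) : EReal))
        atTop := by
  have hf0 : ∀ n, 0 < f n := fun n => one_pos.trans_le (hf1 n)
  have hS : ∀ n, 0 < ∑ i ∈ range (n + 1), f i := fun n =>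
    sum_pos (fun i _ => hf0 i) nonempty_range_add_one
  have hT : ∀ᶠ n : ℕ in atTop, 0 < ∑ i ∈ Icc 1 n, (i : ℝ) * f (i - 1) :=
    (eventually_ge_atTop 1).mono fun n hn =>
      sum_pos (fun i hi => mul_pos (by exact_mod_cast (mem_Icc.1 hi).1) (hf0 _)) ⟨1, by simpa⟩
  change polyGrowthSup (fun n => ∑ i ∈ Icc 1 n, (i : ℝ) * f (i - 1)) =
    1 + polyGrowthSup (fun n => ∑ i ∈ range (n + 1), f i)
  exact le_antisymm
    (polyGrowthSup_le_one_add hT (.of_forall (sum_Icc_natCast_mul_le fun n => (hf0 n).le)))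
    (one_add_polyGrowthSup_le two_pos (.of_forall hS)
      (.of_forall (natCast_mul_sum_range_le hf fun n => (hf0 n).le)))
end
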